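/- arXiv:2511.18052 — 5 statements merged into one kernel-verified Lean document; each statement's English description precedes it below -/
import Mathlib

section
/- Let C > 0 and let (c_i)_{i≥N} be nonnegative reals. Let (X_i)_{i≥N} be a nonnegative adapted process with E[X_{i+1} | F_i] ≤ (1 + c_i) X_i, and suppose each increment satisfies X_{i+1} = X_i or X_i + 1 ≤ X_{i+1} ≤ X_i + C. Then for any M > X_N, P(∃ n ≥ N such that X_n ≥ M ∏_{i=N}^{n−1}(1+c_i) | F_{X_N}) ≤ exp(−(M − X_N)²/(8MC²)). -/
open MeasureTheory Finset

/-!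
Write `P n = ∏_{i=N}^{n-1} (1 + c i)`, so that `X n / P n` is a supermartingale. With
`L = (M - x₀) / (2 C M)` and `K = L² C M`, the process `exp ((L X n + K) / P n)` is a
supermartingale as long as `X n < M P n`: the increments lie in `[0, C]` and `L C ≤ 1`, so
`exp (a Δ) ≤ 1 + (a + a² C) Δ` for `a = L / P (n + 1)`, and the second-order term is paid for by
the decrease of `K / P n`. Stopping it when `X n` first reaches `M P n` and applying Markov's
inequality bounds the probability by `exp (L x₀ + K - L M) = exp (-(M - x₀)² / (4 C M))`, which
is at most the claimed bound when `C ≥ 1`; when `C < 1` no jump is possible and `X` stays at `x₀`.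
-/

theorem Real.exp_mul_le_one_add_mul {t x C : ℝ} (ht : 0 ≤ t) (hx : 0 ≤ x) (hxC : x ≤ C)
    (htC : t * C ≤ 1) : Real.exp (t * x) ≤ 1 + (t + t ^ 2 * C) * x := by
  have htx : |t * x| ≤ 1 := by
    rw [abs_of_nonneg (by positivity)]
    nlinarith [mul_le_mul_of_nonneg_left hxC ht]
  have h := (abs_le.1 (Real.abs_exp_sub_one_sub_id_le htx)).2
  nlinarith [mul_le_mul_of_nonneg_left hxC (mul_nonneg (sq_nonneg t) hx)]

theorem Real.exp_div_le_exp_div_mul_one_add {L K C q x y : ℝ} (hq : 1 ≤ q) (hL : 0 ≤ L)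
    (hLC : L * C ≤ 1) (hxy : x ≤ y) (hyx : y ≤ x + C) :
    Real.exp ((L * y + K) / q)
      ≤ Real.exp ((L * x + K) / q) * (1 + (L / q + (L / q) ^ 2 * C) * (y - x)) := by
  have hsplit : (L * y + K) / q = (L * x + K) / q + L / q * (y - x) := by
    field_simp
    ring
  rw [hsplit, Real.exp_add]
  gcongr
  exact Real.exp_mul_le_one_add_mul (by positivity) (by linarith) (by linarith)
    ((mul_le_mul_of_nonneg_right (div_le_self hL hq) (by linarith)).trans hLC)

theorem Real.exp_div_mul_one_add_le {L K C M p c x : ℝ} (hp : 0 < p) (hc : 0 ≤ c) (hC : 0 ≤ C)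
    (hx : x ≤ M * (p * (1 + c))) (hK : L ^ 2 * C * M ≤ K) :
    Real.exp ((L * x + K) / (p * (1 + c))) *
        (1 + (L / (p * (1 + c)) + (L / (p * (1 + c))) ^ 2 * C) * (c * x))
      ≤ Real.exp ((L * x + K) / p) := by
  set q := p * (1 + c)
  have hq : 0 < q := by positivity
  have hquad : (L / q) ^ 2 * C * x ≤ K / q := by
    rw [div_pow, div_mul_eq_mul_div, div_mul_eq_mul_div, div_le_div_iff₀ (by positivity) hq]
    nlinarith [mul_le_mul_of_nonneg_left hx (mul_nonneg (sq_nonneg L) hC)]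
  have hlin : (L / q + (L / q) ^ 2 * C) * (c * x) ≤ c * ((L * x + K) / q) := by
    have : L / q * x + (L / q) ^ 2 * C * x ≤ (L * x + K) / q := by
      rw [add_div, div_mul_eq_mul_div]
      linarith
    nlinarith [mul_le_mul_of_nonneg_left this hc]
  calc Real.exp ((L * x + K) / q) * (1 + (L / q + (L / q) ^ 2 * C) * (c * x))
      ≤ Real.exp ((L * x + K) / q) * Real.exp (c * ((L * x + K) / q)) := by
        gcongr
        linarith [Real.add_one_le_exp (c * ((L * x + K) / q))]
    _ = Real.exp ((L * x + K) / p) := by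
        rw [← Real.exp_add]
        congr 1
        field_simp
        ring

section
variable {Ω : Type*} {m m0 : MeasurableSpace Ω} {μ : Measure Ω} [IsFiniteMeasure μ]

theorem integrableOn_exp_of_le {F : Ω → ℝ} {s : Set Ω} {B : ℝ} (hF : AEStronglyMeasurable F μ)
    (hs : MeasurableSet s) (hFB : ∀ ω ∈ s, F ω ≤ B) :
    IntegrableOn (fun ω => Real.exp (F ω)) s μ :=
  Measure.integrableOn_of_bounded (measure_ne_top μ s)
    (Real.continuous_exp.comp_aestronglyMeasurable hF) (M := Real.exp B) <| by
    filter_upwards [ae_restrict_mem hs] with ω hω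
    rw [Real.norm_eq_abs, Real.abs_exp]
    exact Real.exp_le_exp.2 (hFB ω hω)

theorem integral_mul_le_integral_mul_of_condExp_le (hm : m ≤ m0) {h f g : Ω → ℝ} {B : ℝ}
    (hh : StronglyMeasurable[m] h) (hh0 : 0 ≤ h) (hhB : ∀ ω, ‖h ω‖ ≤ B)
    (hf : Integrable f μ) (hg : Integrable g μ) (hfg : μ[f|m] ≤ᵐ[μ] g) :
    ∫ ω, h ω * f ω ∂μ ≤ ∫ ω, h ω * g ω ∂μ := by
  have hh' : AEStronglyMeasurable[m0] h μ := (hh.mono hm).aestronglyMeasurable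
  have hhf : Integrable (h * f) μ := hf.bdd_mul hh' (ae_of_all _ hhB)
  calc ∫ ω, h ω * f ω ∂μ = ∫ ω, (μ[h * f|m]) ω ∂μ := (integral_condExp hm).symm
    _ = ∫ ω, h ω * (μ[f|m]) ω ∂μ :=
        integral_congr_ae (condExp_mul_of_stronglyMeasurable_left hh hhf hf)
    _ ≤ ∫ ω, h ω * g ω ∂μ :=
        integral_mono_ae (integrable_condExp.bdd_mul hh' (ae_of_all _ hhB))
          (hg.bdd_mul hh' (ae_of_all _ hhB))
          (hfg.mono fun ω hω => mul_le_mul_of_nonneg_left hω (hh0 ω))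

theorem integral_le_of_le_mul_one_add_of_condExp_le (hm : m ≤ m0) {h f g V₀ V₁ : Ω → ℝ}
    {B β c : ℝ} (hh : StronglyMeasurable[m] h) (hh0 : 0 ≤ h) (hhB : ∀ ω, ‖h ω‖ ≤ B) (hβ : 0 ≤ β)
    (hf : Integrable f μ) (hg : Integrable g μ) (hdrift : μ[g|m] ≤ᵐ[μ] fun ω => (1 + c) * f ω)
    (hV₁ : 0 ≤ V₁) (hV₁h : ∀ ω, V₁ ω ≤ h ω * (1 + β * (g ω - f ω)))
    (hV₀h : ∀ ω, h ω * (1 + β * (c * f ω)) ≤ V₀ ω) (hV₀ : Integrable V₀ μ) :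
    ∫ ω, V₁ ω ∂μ ≤ ∫ ω, V₀ ω ∂μ := by
  have hh' : AEStronglyMeasurable[m0] h μ := (hh.mono hm).aestronglyMeasurable
  have hhint : Integrable h μ := (integrable_const B).mono' hh' (ae_of_all _ hhB)
  have hhf : Integrable (fun ω => h ω * f ω) μ := hf.bdd_mul hh' (ae_of_all _ hhB)
  have hhg : Integrable (fun ω => h ω * g ω) μ := hg.bdd_mul hh' (ae_of_all _ hhB)
  have hdiff : Integrable (fun ω => h ω * g ω - h ω * f ω) μ := hhg.sub hhf
  have hhcf : Integrable (fun ω => c * (h ω * f ω)) μ := hhf.const_mul c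
  have hdrift' : ∫ ω, h ω * g ω ∂μ ≤ c * ∫ ω, h ω * f ω ∂μ + ∫ ω, h ω * f ω ∂μ := by
    calc ∫ ω, h ω * g ω ∂μ ≤ ∫ ω, h ω * ((1 + c) * f ω) ∂μ :=
          integral_mul_le_integral_mul_of_condExp_le hm hh hh0 hhB hg (hf.const_mul _) hdrift
      _ = (1 + c) * ∫ ω, h ω * f ω ∂μ := by
          rw [← integral_const_mul]
          congr 1 with ω
          ring
      _ = _ := by ring
  calc ∫ ω, V₁ ω ∂μ ≤ ∫ ω, (h ω + β * (h ω * g ω - h ω * f ω)) ∂μ :=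
        integral_mono_of_nonneg (ae_of_all _ hV₁) (hhint.add (hdiff.const_mul β))
          (ae_of_all _ fun ω => (hV₁h ω).trans_eq (by ring))
    _ = ∫ ω, h ω ∂μ + β * (∫ ω, h ω * g ω ∂μ - ∫ ω, h ω * f ω ∂μ) := by
        rw [integral_add hhint (hdiff.const_mul β), integral_const_mul, integral_sub hhg hhf]
    _ ≤ ∫ ω, h ω ∂μ + β * (c * ∫ ω, h ω * f ω ∂μ) := by gcongr; linarith
    _ = ∫ ω, (h ω + β * (c * (h ω * f ω))) ∂μ := by
        rw [integral_add hhint (hhcf.const_mul β), integral_const_mul, integral_const_mul]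
    _ ≤ ∫ ω, V₀ ω ∂μ :=
        integral_mono (hhint.add (hhcf.const_mul β)) hV₀ fun ω => (hV₀h ω).trans_eq' (by ring)

theorem setIntegral_exp_div_succ_le (hm : m ≤ m0) {f g : Ω → ℝ} {s : Set Ω} {C L K M p c : ℝ}
    (hC : 0 ≤ C) (hL : 0 ≤ L) (hLC : L * C ≤ 1) (hK : L ^ 2 * C * M ≤ K) (hp : 1 ≤ p)
    (hc : 0 ≤ c) (hfm : Measurable[m] f) (hf : Integrable f μ) (hg : Integrable g μ)
    (hdrift : μ[g|m] ≤ᵐ[μ] fun ω => (1 + c) * f ω) (hinc : ∀ ω, f ω ≤ g ω ∧ g ω ≤ f ω + C)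
    (hs : MeasurableSet[m] s) (hsM : ∀ ω ∈ s, f ω ≤ M * (p * (1 + c))) :
    ∫ ω in s, Real.exp ((L * g ω + K) / (p * (1 + c))) ∂μ
      ≤ ∫ ω in s, Real.exp ((L * f ω + K) / p) ∂μ := by
  set q := p * (1 + c)
  have hq : 1 ≤ q := by nlinarith
  have hs₀ : MeasurableSet[m0] s := hm s hs
  set h := s.indicator fun ω => Real.exp ((L * f ω + K) / q)
  have hhB : ∀ ω, ‖h ω‖ ≤ Real.exp ((L * (M * q) + K) / q) := fun ω => by
    by_cases hω : ω ∈ s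
    · simp only [h, Set.indicator_of_mem hω, Real.norm_eq_abs, Real.abs_exp]
      gcongr
      exact hsM ω hω
    · simp only [h, Set.indicator_of_notMem hω, norm_zero]
      positivity
  have hrhs : IntegrableOn (fun ω => Real.exp ((L * f ω + K) / p)) s μ :=
    integrableOn_exp_of_le (B := (L * (M * q) + K) / p)
      ((((hfm.mono hm le_rfl).const_mul L).add_const K).div_const p).aestronglyMeasurable hs₀
      fun ω hω => by gcongr; exact hsM ω hω
  rw [← integral_indicator hs₀, ← integral_indicator hs₀]
  refine integral_le_of_le_mul_one_add_of_condExp_le hm (h := h) (β := L / q + (L / q) ^ 2 * C)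
    ((Real.measurable_exp.comp (((hfm.const_mul L).add_const K).div_const q)
      ).stronglyMeasurable.indicator hs) (Set.indicator_nonneg fun _ _ => (Real.exp_pos _).le)
    hhB (by positivity) hf hg hdrift (Set.indicator_nonneg fun _ _ => (Real.exp_pos _).le)
    (fun ω => ?_) (fun ω => ?_) (hrhs.integrable_indicator hs₀)
  · by_cases hω : ω ∈ s
    · simpa only [h, Set.indicator_of_mem hω]
        using Real.exp_div_le_exp_div_mul_one_add hq hL hLC (hinc ω).1 (hinc ω).2
    · simp [h, Set.indicator_of_notMem hω]
  · by_cases hω : ω ∈ s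
    · simpa only [h, Set.indicator_of_mem hω]
        using Real.exp_div_mul_one_add_le (by linarith) hc hC (hsM ω hω) hK
    · simp [h, Set.indicator_of_notMem hω]

end

def belowBefore {Ω : Type*} (Φ : ℕ → Ω → ℝ) (ε : ℝ) (n : ℕ) : Set Ω := {ω | ∀ j < n, Φ j ω < ε}

section
variable {Ω : Type*} {m m0 : MeasurableSpace Ω} {μ : Measure Ω} [IsFiniteMeasure μ]
  {Φ : ℕ → Ω → ℝ} {ε : ℝ}

theorem belowBefore_succ (n : ℕ) :
    belowBefore Φ ε (n + 1) = belowBefore Φ ε n ∩ {ω | Φ n ω < ε} := by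
  ext ω
  simp only [belowBefore, Set.mem_inter_iff, Set.mem_ofPred_eq, Nat.lt_succ_iff_lt_or_eq, or_imp,
    forall_and, forall_eq]

theorem belowBefore_antitone : Antitone (belowBefore Φ ε) :=
  fun _ _ hmn _ hω j hj => hω j (hj.trans_le hmn)

theorem measurableSet_belowBefore {n : ℕ} (hΦ : ∀ j < n, Measurable[m] (Φ j)) :
    MeasurableSet[m] (belowBefore Φ ε n) := by
  simp only [belowBefore, Set.ofPred_forall]
  exact .iInter fun j => .iInter fun hj => measurableSet_lt (hΦ j hj) measurable_const

-- The left side bounds `𝔼 Φ (min n τ)` from below, `τ` the first time `Φ` reaches `ε`; it does not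
-- increase with `n`.
theorem mul_measureReal_compl_belowBefore_add_le (hΦm : ∀ n, Measurable (Φ n))
    (hint : ∀ n, IntegrableOn (Φ n) (belowBefore Φ ε n) μ)
    (hstep : ∀ n, ∫ ω in belowBefore Φ ε (n + 1), Φ (n + 1) ω ∂μ
      ≤ ∫ ω in belowBefore Φ ε (n + 1), Φ n ω ∂μ) (n : ℕ) :
    ε * μ.real (belowBefore Φ ε n)ᶜ + ∫ ω in belowBefore Φ ε n, Φ n ω ∂μ ≤ ∫ ω, Φ 0 ω ∂μ := by
  induction n with
  | zero => simp [belowBefore]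
  | succ n ih =>
    set A := belowBefore Φ ε
    have hA : ∀ n, MeasurableSet (A n) := fun n => measurableSet_belowBefore fun j _ => hΦm j
    have hsub : A (n + 1) ⊆ A n := belowBefore_antitone n.le_succ
    have hA_succ : A (n + 1) = A n ∩ {ω | Φ n ω < ε} := belowBefore_succ n
    have hD : MeasurableSet (A n \ A (n + 1)) := (hA n).diff (hA (n + 1))
    have hmarkov : ε * μ.real (A n \ A (n + 1)) ≤ ∫ ω in A n \ A (n + 1), Φ n ω ∂μ := by
      calc ε * μ.real (A n \ A (n + 1)) = ∫ _ in A n \ A (n + 1), ε ∂μ := by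
            rw [setIntegral_const, smul_eq_mul, mul_comm]
        _ ≤ _ := setIntegral_mono_on (integrableOn_const (measure_ne_top μ _))
            ((hint n).mono_set Set.sdiff_subset) hD fun ω ⟨hω, hω'⟩ =>
              not_lt.1 fun h => hω' (hA_succ ▸ ⟨hω, h⟩)
    have hsplit : ∫ ω in A n, Φ n ω ∂μ
        = ∫ ω in A n \ A (n + 1), Φ n ω ∂μ + ∫ ω in A (n + 1), Φ n ω ∂μ := by
      conv_lhs => rw [← Set.sdiff_union_of_subset hsub]
      exact setIntegral_union Set.disjoint_sdiff_left (hA (n + 1))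
        ((hint n).mono_set Set.sdiff_subset) ((hint n).mono_set hsub)
    have hcompl : μ.real (A (n + 1))ᶜ = μ.real (A n)ᶜ + μ.real (A n \ A (n + 1)) := by
      have hunion : (A (n + 1))ᶜ = (A n)ᶜ ∪ (A n \ A (n + 1)) := by
        ext ω
        have := @hsub ω
        simp only [Set.mem_union, Set.mem_compl_iff, Set.mem_sdiff]
        tauto
      rw [hunion, measureReal_union (disjoint_compl_left.mono_right Set.sdiff_subset) hD]
    rw [hcompl, mul_add]
    linarith [hstep n]

theorem measure_exists_le_le_of_setIntegral_succ_le (hε : 0 < ε) (hΦm : ∀ n, Measurable (Φ n))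
    (hΦ0 : ∀ n ω, 0 ≤ Φ n ω) (hint : ∀ n, IntegrableOn (Φ n) (belowBefore Φ ε n) μ)
    (hstep : ∀ n, ∫ ω in belowBefore Φ ε (n + 1), Φ (n + 1) ω ∂μ
      ≤ ∫ ω in belowBefore Φ ε (n + 1), Φ n ω ∂μ) :
    μ {ω | ∃ n, ε ≤ Φ n ω} ≤ ENNReal.ofReal ((∫ ω, Φ 0 ω ∂μ) / ε) := by
  have hunion : {ω | ∃ n, ε ≤ Φ n ω} = ⋃ n, (belowBefore Φ ε n)ᶜ := by
    ext ω
    simp only [belowBefore, Set.mem_ofPred_eq, Set.mem_iUnion, Set.mem_compl_iff, not_forall,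
      not_lt]
    exact ⟨fun ⟨n, hn⟩ => ⟨n + 1, n, n.lt_succ_self, hn⟩, fun ⟨_, j, _, hj⟩ => ⟨j, hj⟩⟩
  rw [hunion, Monotone.measure_iUnion fun _ _ hmn => Set.compl_subset_compl.2
    (belowBefore_antitone hmn)]
  refine iSup_le fun n => ?_
  rw [← ofReal_measureReal]
  refine ENNReal.ofReal_le_ofReal ((le_div_iff₀' hε).2 ?_)
  have := setIntegral_nonneg (μ := μ)
    (measurableSet_belowBefore (ε := ε) (n := n) fun j _ => hΦm j) fun ω _ => hΦ0 n ω
  linarith [mul_measureReal_compl_belowBefore_add_le hΦm hint hstep n]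

end

def growthFactor (c : ℕ → ℝ) (N n : ℕ) : ℝ := ∏ i ∈ Ico N n, (1 + c i)

theorem one_le_growthFactor {c : ℕ → ℝ} (hc : ∀ i, 0 ≤ c i) (N n : ℕ) : 1 ≤ growthFactor c N n :=
  one_le_prod fun i _ => by linarith [hc i]

theorem growthFactor_succ (c : ℕ → ℝ) {N n : ℕ} (hn : N ≤ n) :
    growthFactor c N (n + 1) = growthFactor c N n * (1 + c n) :=
  prod_Ico_succ_top hn _

noncomputable def expPotential {Ω : Type*} (L K : ℝ) (c : ℕ → ℝ) (N : ℕ) (X : ℕ → Ω → ℝ) (n : ℕ)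
    (ω : Ω) : ℝ :=
  Real.exp ((L * X n ω + K) / growthFactor c N n)

section
variable {Ω : Type*} {X : ℕ → Ω → ℝ} {c : ℕ → ℝ} {N n : ℕ} {C L K M : ℝ}

theorem lt_of_expPotential_lt (hc : ∀ i, 0 ≤ c i) (hL : 0 < L) (hK : 0 ≤ K) {ω : Ω}
    (h : expPotential L K c N X n ω < Real.exp (L * M)) : X n ω < M * growthFactor c N n := by
  have hP := one_le_growthFactor hc N n
  rw [expPotential, Real.exp_lt_exp, div_lt_iff₀ (by linarith)] at h
  nlinarith

variable {m0 : MeasurableSpace Ω} {μ : Measure Ω} [IsFiniteMeasure μ]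

theorem integrableOn_expPotential_succ (hL : 0 ≤ L) (hc : ∀ i, 0 ≤ c i)
    (hXm : Measurable (X (n + 1))) (hinc : ∀ ω, X (n + 1) ω ≤ X n ω + C) {s : Set Ω}
    (hs : MeasurableSet s) (hsM : ∀ ω ∈ s, X n ω ≤ M * growthFactor c N n) :
    IntegrableOn (expPotential L K c N X (n + 1)) s μ :=
  integrableOn_exp_of_le (B := (L * (M * growthFactor c N n + C) + K) / growthFactor c N (n + 1))
    (((hXm.const_mul L).add_const K).div_const _).aestronglyMeasurable hs fun ω hω => by
      have := one_le_growthFactor hc N (n + 1)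
      gcongr
      linarith [hinc ω, hsM ω hω]

theorem setIntegral_expPotential_succ_le {ℱ : Filtration ℕ m0} (hC : 0 ≤ C) (hL : 0 ≤ L)
    (hLC : L * C ≤ 1) (hM : 0 ≤ M) (hK : L ^ 2 * C * M ≤ K) (hc : ∀ i, 0 ≤ c i) (hn : N ≤ n)
    (hXm : Measurable[ℱ n] (X n)) (hXn : Integrable (X n) μ) (hXn' : Integrable (X (n + 1)) μ)
    (hrec : μ[X (n + 1) | ℱ n] ≤ᵐ[μ] fun ω => (1 + c n) * X n ω)
    (hinc : ∀ ω, X n ω ≤ X (n + 1) ω ∧ X (n + 1) ω ≤ X n ω + C) {s : Set Ω}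
    (hs : MeasurableSet[ℱ n] s) (hsM : ∀ ω ∈ s, X n ω ≤ M * growthFactor c N n) :
    ∫ ω in s, expPotential L K c N X (n + 1) ω ∂μ ≤ ∫ ω in s, expPotential L K c N X n ω ∂μ := by
  have hP := one_le_growthFactor hc N n
  simp only [expPotential, growthFactor_succ c hn]
  exact setIntegral_exp_div_succ_le (ℱ.le n) hC hL hLC hK hP (hc n) hXm hXn hXn' hrec hinc hs
    fun ω hω => (hsM ω hω).trans <| mul_le_mul_of_nonneg_left
      (le_mul_of_one_le_right (by linarith) (by linarith [hc n])) hM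

end

theorem measure_exists_le_le_exp_of_increment_mem_Icc
    {Ω : Type*} {m0 : MeasurableSpace Ω} {μ : Measure Ω} [IsProbabilityMeasure μ]
    {ℱ : Filtration ℕ m0} {X : ℕ → Ω → ℝ} {N : ℕ} {C : ℝ} (hC : 0 ≤ C) {c : ℕ → ℝ}
    (hc : ∀ i, 0 ≤ c i) (hadapt : Adapted ℱ X) (hint : ∀ i, Integrable (X i) μ)
    (hrec : ∀ i, N ≤ i → μ[X (i + 1) | ℱ i] ≤ᵐ[μ] fun ω => (1 + c i) * X i ω)
    (hinc : ∀ i ω, N ≤ i → X i ω ≤ X (i + 1) ω ∧ X (i + 1) ω ≤ X i ω + C)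
    {x₀ : ℝ} (hstart : ∀ ω, X N ω = x₀) {L K M : ℝ} (hL : 0 < L) (hLC : L * C ≤ 1) (hM : 0 ≤ M)
    (hK : L ^ 2 * C * M ≤ K) :
    μ {ω | ∃ n, N ≤ n ∧ M * growthFactor c N n ≤ X n ω}
      ≤ ENNReal.ofReal (Real.exp (L * x₀ + K - L * M)) := by
  have hK₀ : 0 ≤ K := le_trans (by positivity) hK
  set ε := Real.exp (L * M)
  set Φ : ℕ → Ω → ℝ := fun k => expPotential L K c N X (N + k)
  have hbelow : ∀ k ω, Φ k ω < ε → X (N + k) ω < M * growthFactor c N (N + k) :=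
    fun k ω => lt_of_expPotential_lt hc hL hK₀
  have hΦm : ∀ k, Measurable[ℱ (N + k)] (Φ k) := fun k =>
    Real.measurable_exp.comp ((((hadapt _).const_mul L).add_const K).div_const _)
  have hs : ∀ k, MeasurableSet[ℱ (N + k)] (belowBefore Φ ε (k + 1)) := fun k =>
    measurableSet_belowBefore fun j hj => (hΦm j).mono (ℱ.mono (by omega)) le_rfl
  have hint' : ∀ n, IntegrableOn (Φ n) (belowBefore Φ ε n) μ := by
    rintro (_ | k)
    · have hΦ₀ : Φ 0 = fun _ => Real.exp ((L * x₀ + K) / growthFactor c N N) := by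
        ext ω
        simp [Φ, expPotential, hstart]
      rw [hΦ₀]
      exact (integrable_const _).integrableOn
    · exact integrableOn_expPotential_succ hL.le hc ((hadapt _).mono (ℱ.le _) le_rfl)
        (fun ω => (hinc _ ω le_self_add).2) (ℱ.le _ _ (hs k))
        fun ω hω => (hbelow k ω (hω k k.lt_succ_self)).le
  have hstep : ∀ k, ∫ ω in belowBefore Φ ε (k + 1), Φ (k + 1) ω ∂μ
      ≤ ∫ ω in belowBefore Φ ε (k + 1), Φ k ω ∂μ := fun k =>
    setIntegral_expPotential_succ_le hC hL.le hLC hM hK hc le_self_add (hadapt _) (hint _)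
      (hint _) (hrec _ le_self_add) (fun ω => hinc _ ω le_self_add) (hs k)
      fun ω hω => (hbelow k ω (hω k k.lt_succ_self)).le
  have hsub : {ω | ∃ n, N ≤ n ∧ M * growthFactor c N n ≤ X n ω} ⊆ {ω | ∃ k, ε ≤ Φ k ω} := by
    rintro ω ⟨n, hn, hω⟩
    obtain ⟨k, rfl⟩ := Nat.exists_eq_add_of_le hn
    exact ⟨k, not_lt.1 fun h => (hbelow k ω h).not_ge hω⟩
  calc μ {ω | ∃ n, N ≤ n ∧ M * growthFactor c N n ≤ X n ω}
      ≤ μ {ω | ∃ k, ε ≤ Φ k ω} := measure_mono hsub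
    _ ≤ ENNReal.ofReal ((∫ ω, Φ 0 ω ∂μ) / ε) :=
        measure_exists_le_le_of_setIntegral_succ_le (Real.exp_pos _)
          (fun k => (hΦm k).mono (ℱ.le _) le_rfl) (fun _ _ => (Real.exp_pos _).le) hint' hstep
    _ = ENNReal.ofReal (Real.exp (L * x₀ + K - L * M)) := by
        simp [Φ, ε, expPotential, growthFactor, hstart, Real.exp_sub]

theorem measure_exists_le_le_exp_neg_sq_div
    {Ω : Type*} {m0 : MeasurableSpace Ω} {μ : Measure Ω} [IsProbabilityMeasure μ]
    {ℱ : Filtration ℕ m0} {X : ℕ → Ω → ℝ} {N : ℕ} {C : ℝ} (hC : 0 < C) {c : ℕ → ℝ}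
    (hc : ∀ i, 0 ≤ c i) (hadapt : Adapted ℱ X) (hint : ∀ i, Integrable (X i) μ)
    (hrec : ∀ i, N ≤ i → μ[X (i + 1) | ℱ i] ≤ᵐ[μ] fun ω => (1 + c i) * X i ω)
    (hinc : ∀ i ω, N ≤ i → X i ω ≤ X (i + 1) ω ∧ X (i + 1) ω ≤ X i ω + C)
    {x₀ M : ℝ} (hstart : ∀ ω, X N ω = x₀) (hx₀ : 0 ≤ x₀) (hM : x₀ < M) :
    μ {ω | ∃ n, N ≤ n ∧ M * growthFactor c N n ≤ X n ω}
      ≤ ENNReal.ofReal (Real.exp (-(M - x₀) ^ 2 / (4 * C * M))) := by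
  have hM₀ : 0 < M := hx₀.trans_lt hM
  have hL : 0 < (M - x₀) / (2 * C * M) := div_pos (by linarith) (by positivity)
  have hLC : (M - x₀) / (2 * C * M) * C ≤ 1 := by
    rw [div_mul_eq_mul_div, div_le_one (by positivity)]
    nlinarith
  convert measure_exists_le_le_exp_of_increment_mem_Icc hC.le hc hadapt hint hrec hinc hstart hL hLC
    hM₀.le le_rfl using 4
  field_simp
  ring

theorem eq_of_forall_increment_eq_or_one_le {α : Type*} {X : ℕ → α → ℝ} {N : ℕ} {C : ℝ}
    (hC : C < 1) (hinc : ∀ i ω, N ≤ i →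
      X (i + 1) ω = X i ω ∨ (X i ω + 1 ≤ X (i + 1) ω ∧ X (i + 1) ω ≤ X i ω + C))
    {n : ℕ} (hn : N ≤ n) (ω : α) : X n ω = X N ω := by
  induction n, hn using Nat.le_induction with
  | base => rfl
  | succ n hn ih =>
    rcases hinc n ω hn with h | ⟨h₁, h₂⟩
    · rw [h, ih]
    · linarith

/-- Lemma 5.1 (me3): exponential maximal upper bound for a process with
multiplicative conditional drift and bounded jumps, started at the constant `x₀`. -/
theorem maximal_upper_bound_me3
    {Ω : Type*} {m0 : MeasurableSpace Ω} (μ : Measure Ω) [IsProbabilityMeasure μ]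
    (ℱ : Filtration ℕ m0) (X : ℕ → Ω → ℝ) (N : ℕ)
    (C : ℝ) (hC : 0 < C) (c : ℕ → ℝ) (hc : ∀ i, 0 ≤ c i)
    (hadapt : Adapted ℱ X) (hint : ∀ i, Integrable (X i) μ)
    (hpos : ∀ i, 0 ≤ᵐ[μ] X i)
    (hrec : ∀ i, N ≤ i → μ[X (i + 1) | ℱ i] ≤ᵐ[μ] fun ω => (1 + c i) * X i ω)
    (hinc : ∀ i ω, N ≤ i →
      X (i + 1) ω = X i ω ∨ (X i ω + 1 ≤ X (i + 1) ω ∧ X (i + 1) ω ≤ X i ω + C))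
    (x₀ M : ℝ) (hstart : ∀ ω, X N ω = x₀) (hM : x₀ < M) :
    μ {ω | ∃ n, N ≤ n ∧ M * ∏ i ∈ Finset.Ico N n, (1 + c i) ≤ X n ω}
      ≤ ENNReal.ofReal (Real.exp (-(M - x₀) ^ 2 / (8 * M * C ^ 2))) := by
  have hx₀ : 0 ≤ x₀ := by
    obtain ⟨ω, hω⟩ := (hpos N).exists
    simpa [hstart ω] using hω
  have hM₀ : 0 < M := hx₀.trans_lt hM
  rcases lt_or_ge C 1 with hC1 | hC1
  · have hempty : {ω | ∃ n, N ≤ n ∧ M * ∏ i ∈ Finset.Ico N n, (1 + c i) ≤ X n ω} = ∅ := by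
      refine Set.eq_empty_of_forall_notMem fun ω ⟨n, hn, hω⟩ => ?_
      rw [eq_of_forall_increment_eq_or_one_le hC1 hinc hn, hstart] at hω
      have hP := one_le_growthFactor hc N n
      rw [growthFactor] at hP
      nlinarith
    simp [hempty]
  · calc _ ≤ ENNReal.ofReal (Real.exp (-(M - x₀) ^ 2 / (4 * C * M))) :=
          measure_exists_le_le_exp_neg_sq_div hC hc hadapt hint hrec
            (fun i ω hi => by rcases hinc i ω hi with h | h <;> constructor <;> linarith)
            hstart hx₀ hM
      _ ≤ _ := by
        refine ENNReal.ofReal_le_ofReal (Real.exp_le_exp.2 ?_)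
        rw [neg_div, neg_div, neg_le_neg_iff]
        exact div_le_div_of_nonneg_left (sq_nonneg _) (by positivity)
          (by nlinarith [mul_pos hM₀ hC])
end

section
/- Let C > 0 and (c_i)_{i≥N} nonnegative reals. Let (X_i)_{i≥N} be an adapted process with E[X_{i+1} | F_i] ≥ (1 + c_i) X_i, X_N > 0, and increments satisfying X_{i+1} = X_i or X_i + 1 ≤ X_{i+1} ≤ X_i + C. Then for any M ≤ X_N − 8C², P(∃ n ≥ N such that X_n ≤ M ∏_{i=N}^{n−1}(1+c_i) | F_{X_N}) ≤ 2 exp(−(M − X_N)²/(16 X_N C²)). -/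
/-!
Put `r₀ = √x₀`, `g = √x₀ - √M`, `l = g / C` and `Zₙ = exp (l (√(M Pₙ) - √Xₙ))`, where
`Pₙ = ∏_{N ≤ i < n} (1 + cᵢ)`. Since `y ↦ exp (-l √y)` is convex, its increment over a step of
size in `[0, C]` lies below the chord over `[Xₙ, Xₙ + C]`; combined with
`E[Xₙ₊₁ | ℱₙ] ≥ (1 + cₙ) Xₙ` this shows that `Z` does not grow in expectation while
`√Xₙ ≥ √(M Pₙ) + C / (2 r₀) + g / 2`. Stopping `Z` when it first crosses the corresponding level
and applying Markov's inequality gives the bound `exp (-l (g / 2 - C / (2 r₀)))`, which is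
small enough once `M ≤ x₀ - 8 C²` and `C ≥ 1`. If `C < 1`, no increment can lie in `[1, C]`, so
`X` is constant and all `cᵢ` vanish.
-/

open MeasureTheory Finset Real

lemma sub_sq_le_one_sub_exp_neg {t : ℝ} (ht : 0 ≤ t) : t - t ^ 2 ≤ 1 - exp (-t) := by
  have h : exp (-t) * (1 + t) ≤ 1 := by
    calc exp (-t) * (1 + t) ≤ exp (-t) * exp t :=
          mul_le_mul_of_nonneg_left (by linarith [add_one_le_exp t]) (exp_pos _).le
      _ = 1 := by rw [← exp_add, neg_add_cancel, exp_zero]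
  nlinarith [one_sub_le_exp_neg t]

lemma convexOn_exp_neg_mul_sqrt {l : ℝ} (hl : 0 ≤ l) :
    ConvexOn ℝ (Set.Ici 0) (fun y => exp (-(l * √y))) := by
  have himage : Convex ℝ ((fun y : ℝ => -(l * √y)) '' Set.Ici 0) :=
    (isPreconnected_Ici.image _ (by fun_prop)).ordConnected.convex
  exact (convexOn_exp.subset (Set.subset_univ _) himage).comp
    (strictConcaveOn_sqrt.concaveOn.smul hl).neg (exp_monotone.monotoneOn _)

noncomputable def chordSlope (l C x : ℝ) : ℝ := (exp (-(l * √x)) - exp (-(l * √(x + C)))) / C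

lemma exp_neg_mul_sqrt_le_chord {l C x t : ℝ} (hl : 0 ≤ l) (hC : 0 < C) (hx : 0 ≤ x)
    (ht : 0 ≤ t) (htC : t ≤ C) :
    exp (-(l * √(x + t))) ≤ exp (-(l * √x)) - chordSlope l C x * t := by
  have hb : t / C ≤ 1 := div_le_one_of_le₀ htC hC.le
  have h := (convexOn_exp_neg_mul_sqrt hl).2 (Set.mem_Ici.2 hx)
    (Set.mem_Ici.2 (by linarith : 0 ≤ x + C)) (sub_nonneg.2 hb) (by positivity)
    (sub_add_cancel 1 (t / C))
  have hxt : (1 - t / C) • x + (t / C) • (x + C) = x + t := by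
    simp only [smul_eq_mul]; field_simp; ring
  rw [hxt] at h
  simp only [smul_eq_mul] at h
  calc exp (-(l * √(x + t))) ≤ _ := h
    _ = _ := by unfold chordSlope; field_simp; ring

lemma chordSlope_nonneg {l C : ℝ} (hl : 0 ≤ l) (hC : 0 < C) (x : ℝ) :
    0 ≤ chordSlope l C x := by
  have : √x ≤ √(x + C) := sqrt_le_sqrt (by linarith)
  unfold chordSlope
  exact div_nonneg (sub_nonneg.2 (exp_le_exp.2 (by nlinarith))) hC.le

lemma chordSlope_le {l C x : ℝ} (hl : 0 ≤ l) (hC : 0 < C) : chordSlope l C x ≤ 1 / C := by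
  have : exp (-(l * √x)) ≤ 1 := exp_le_one_iff.2 (by have := sqrt_nonneg x; nlinarith)
  unfold chordSlope
  exact div_le_div_of_nonneg_right (by linarith [exp_pos (-(l * √(x + C)))]) hC.le

lemma continuous_chordSlope (l C : ℝ) : Continuous (chordSlope l C) := by
  unfold chordSlope; fun_prop

lemma mul_sq_le_of_barrier {C r0 r q g m : ℝ} (hC : 0 < C) (hr0 : 0 < r0) (hrr0 : r0 ≤ r)
    (hq : q ^ 2 = r ^ 2 + C) (hq0 : 0 ≤ q) (hg : 0 ≤ g) (hbar : m + (C / (2 * r0) + g / 2) ≤ r) :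
    m * (q + r) ^ 2 ≤ 2 * r ^ 2 * ((q + r) - g) := by
  have hrq : r ≤ q := by nlinarith
  have hδ : q - r ≤ C / (2 * r0) := by rw [le_div_iff₀ (by positivity)]; nlinarith
  have h1 : (r - (q - r) / 2) * (q + r) ^ 2 ≤ 2 * r ^ 2 * (q + r) := by nlinarith
  have h2 : 2 * r ^ 2 * g ≤ g / 2 * (q + r) ^ 2 := by
    nlinarith [mul_le_mul_of_nonneg_left (show 4 * r ^ 2 ≤ (q + r) ^ 2 by nlinarith) hg]
  have h3 : m ≤ r - (q - r) / 2 - g / 2 := by linarith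
  nlinarith [mul_le_mul_of_nonneg_right h3 (sq_nonneg (q + r))]

lemma one_sub_mul_one_sub_exp_le {C r0 g c x m : ℝ} (hC : 0 < C) (hr0 : 0 < r0) (hg : 0 < g)
    (hc : 0 ≤ c) (hx : r0 ^ 2 ≤ x) (hm : 0 ≤ m) (hbar : m + (C / (2 * r0) + g / 2) ≤ √x) :
    1 - c * x / C * (1 - exp (-(g / C * (√(x + C) - √x))))
      ≤ exp (-(g / C * (m * √(1 + c) - m))) := by
  have hx0 : 0 ≤ x := le_trans (sq_nonneg r0) hx
  set r := √x with hr
  set q := √(x + C)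
  have hr2 : r ^ 2 = x := sq_sqrt hx0
  have hq2 : q ^ 2 = r ^ 2 + C := by rw [hr2]; exact sq_sqrt (by linarith)
  have hrr0 : r0 ≤ r := by rw [hr, ← sqrt_sq hr0.le]; exact sqrt_le_sqrt hx
  have hs : 0 < q + r := by positivity
  have ht : g / C * (q - r) = g / (q + r) := by
    rw [div_mul_eq_mul_div, div_eq_div_iff hC.ne' hs.ne']
    linear_combination g * hq2
  have hpoly := mul_sq_le_of_barrier hC hr0 hrr0 hq2 (sqrt_nonneg _) hg.le hbar
  have hsqrt : √(1 + c) ≤ 1 + c / 2 := by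
    rw [sqrt_le_left (by positivity)]; nlinarith
  have hdrift : g / C * (m * √(1 + c) - m) ≤ c * x / C * (g / (q + r) - (g / (q + r)) ^ 2) := by
    calc g / C * (m * √(1 + c) - m) ≤ g / C * (m * (c / 2)) := by
          gcongr; nlinarith
      _ ≤ c * x / C * (g / (q + r) - (g / (q + r)) ^ 2) := by
        rw [← hr2]
        field_simp
        nlinarith [mul_le_mul_of_nonneg_left hpoly (mul_nonneg hc hg.le)]
  rw [ht]
  calc 1 - c * x / C * (1 - exp (-(g / (q + r))))
        ≤ 1 - c * x / C * (g / (q + r) - (g / (q + r)) ^ 2) := by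
        have := sub_sq_le_one_sub_exp_neg (t := g / (q + r)) (by positivity)
        have : 0 ≤ c * x / C := by positivity
        nlinarith
    _ ≤ 1 - g / C * (m * √(1 + c) - m) := by linarith
    _ ≤ exp (-(g / C * (m * √(1 + c) - m))) := by
        linarith [add_one_le_exp (-(g / C * (m * √(1 + c) - m)))]

lemma exp_mul_sub_chordSlope_le {C r0 g c x b : ℝ} (hC : 0 < C) (hr0 : 0 < r0) (hg : 0 < g)
    (hc : 0 ≤ c) (hx : r0 ^ 2 ≤ x) (hb : 0 ≤ b) (hbar : b + (C / (2 * r0) + g / 2) ≤ √x) :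
    exp (g / C * (b * √(1 + c))) * (exp (-(g / C * √x)) - c * (chordSlope (g / C) C x * x))
      ≤ exp (g / C * (b - √x)) := by
  have hfactor : exp (-(g / C * √x)) - c * (chordSlope (g / C) C x * x)
      = exp (-(g / C * √x)) * (1 - c * x / C * (1 - exp (-(g / C * (√(x + C) - √x))))) := by
    have : exp (-(g / C * √(x + C)))
        = exp (-(g / C * √x)) * exp (-(g / C * (√(x + C) - √x))) := by
      rw [← exp_add]; ring_nf
    unfold chordSlope
    rw [this]
    field_simp
  calc exp (g / C * (b * √(1 + c))) * (exp (-(g / C * √x)) - c * (chordSlope (g / C) C x * x))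
      ≤ exp (g / C * (b * √(1 + c)))
          * (exp (-(g / C * √x)) * exp (-(g / C * (b * √(1 + c) - b)))) := by
        rw [hfactor]
        gcongr
        exact one_sub_mul_one_sub_exp_le hC hr0 hg hc hx hb hbar
    _ = exp (g / C * (b - √x)) := by rw [← exp_add, ← exp_add]; ring_nf

lemma sq_sub_sq_div_le {C r0 s : ℝ} (hC : 3 ≤ 4 * C) (hs : 0 ≤ s) (hr0 : 0 < r0)
    (hgap : s ^ 2 + 8 * C ^ 2 ≤ r0 ^ 2) :
    (s ^ 2 - r0 ^ 2) ^ 2 / (16 * r0 ^ 2 * C ^ 2)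
      ≤ (r0 - s) / C * ((r0 - s) - (C / (2 * r0) + (r0 - s) / 2)) := by
  have hC0 : 0 < C := by linarith
  have hsr0 : s < r0 := by nlinarith
  set g := r0 - s
  have hg0 : 0 < g := by linarith
  have hdiff : r0 ^ 2 - s ^ 2 ≤ 2 * r0 * g := by nlinarith
  have hlhs : (s ^ 2 - r0 ^ 2) ^ 2 / (16 * r0 ^ 2 * C ^ 2) ≤ g ^ 2 / (4 * C ^ 2) := by
    rw [div_le_div_iff₀ (by positivity) (by positivity)]
    have : (s ^ 2 - r0 ^ 2) ^ 2 ≤ (2 * r0 * g) ^ 2 := by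
      rw [← neg_sub, neg_sq]; exact pow_le_pow_left₀ (by nlinarith) hdiff 2
    nlinarith [mul_le_mul_of_nonneg_right this (by positivity : (0 : ℝ) ≤ 4 * C ^ 2)]
  have hrhs : g / C * (g - (C / (2 * r0) + g / 2)) = g ^ 2 / (2 * C) - g / (2 * r0) := by
    field_simp; ring
  have hsmall : g / (2 * r0) ≤ g ^ 2 / (8 * C ^ 2) := by
    rw [div_le_div_iff₀ (by positivity) (by positivity)]
    nlinarith [mul_le_mul_of_nonneg_left (by linarith : 8 * C ^ 2 ≤ 2 * r0 * g) hg0.le]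
  have hsum : g ^ 2 / (4 * C ^ 2) + g ^ 2 / (8 * C ^ 2) ≤ g ^ 2 / (2 * C) := by
    rw [div_add_div _ _ (by positivity) (by positivity),
      div_le_div_iff₀ (by positivity) (by positivity)]
    nlinarith [mul_le_mul_of_nonneg_left hC (by positivity : (0 : ℝ) ≤ g ^ 2 * C ^ 3 * 32)]
  rw [hrhs]
  linarith

section Measure

variable {Ω : Type*} {m m0 : MeasurableSpace Ω} {μ : Measure Ω}

lemma setIntegral_mul_le_of_le_condExp [IsFiniteMeasure μ] (hm : m ≤ m0) {A : Set Ω}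
    (hA : MeasurableSet[m] A) {φ f g : Ω → ℝ} {B : ℝ} (hφ : StronglyMeasurable[m] φ)
    (hφ0 : ∀ ω, 0 ≤ φ ω) (hφB : ∀ ω, φ ω ≤ B)
    (hf : Integrable f μ) (hg : Integrable g μ) (hfg : f ≤ᵐ[μ] μ[g | m]) :
    ∫ ω in A, φ ω * f ω ∂μ ≤ ∫ ω in A, φ ω * g ω ∂μ := by
  have hφB' : ∀ᵐ ω ∂μ, ‖φ ω‖ ≤ B :=
    ae_of_all _ fun ω => by rw [norm_of_nonneg (hφ0 ω)]; exact hφB ω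
  have hφm : AEStronglyMeasurable φ μ := (hφ.mono hm).aestronglyMeasurable
  have hφg : Integrable (φ * g) μ := hg.bdd_mul hφm hφB'
  calc ∫ ω in A, φ ω * f ω ∂μ ≤ ∫ ω in A, φ ω * (μ[g | m]) ω ∂μ :=
        setIntegral_mono_ae_restrict (hf.bdd_mul hφm hφB').integrableOn
          (integrable_condExp.bdd_mul hφm hφB').integrableOn
          (ae_restrict_of_ae (hfg.mono fun ω h => mul_le_mul_of_nonneg_left h (hφ0 ω)))
    _ = ∫ ω in A, (μ[φ * g | m]) ω ∂μ :=
        setIntegral_congr_ae (hm A hA)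
          ((condExp_mul_of_stronglyMeasurable_left hφ hφg hg).mono fun ω h _ => h.symm)
    _ = ∫ ω in A, φ ω * g ω ∂μ := setIntegral_condExp hm hφg hA

lemma integrable_exp_neg_mul_sqrt [IsFiniteMeasure μ] {l : ℝ} (hl : 0 ≤ l) {Z : Ω → ℝ}
    (hZ : AEStronglyMeasurable Z μ) :
    Integrable (fun ω => exp (-(l * √(Z ω)))) μ := by
  refine .of_bound (by fun_prop) 1 (ae_of_all _ fun ω => ?_)
  rw [norm_of_nonneg (exp_pos _).le, exp_le_one_iff]
  have := sqrt_nonneg (Z ω)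
  nlinarith

lemma integrable_chordSlope_mul {l C : ℝ} (hl : 0 ≤ l) (hC : 0 < C) {Y Z : Ω → ℝ}
    (hY : AEStronglyMeasurable Y μ) (hZ : Integrable Z μ) :
    Integrable (fun ω => chordSlope l C (Y ω) * Z ω) μ :=
  hZ.bdd_mul ((continuous_chordSlope l C).comp_aestronglyMeasurable hY) (c := 1 / C)
    (ae_of_all _ fun ω => by
      rw [norm_of_nonneg (chordSlope_nonneg hl hC _)]; exact chordSlope_le hl hC)

lemma setIntegral_exp_neg_sqrt_le [IsFiniteMeasure μ] (hm : m ≤ m0) {A : Set Ω}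
    (hA : MeasurableSet[m] A) {l C c : ℝ} (hl : 0 ≤ l) (hC : 0 < C) {Y Y' : Ω → ℝ}
    (hY : Measurable[m] Y) (hYint : Integrable Y μ)
    (hY'int : Integrable Y' μ) (hY0 : ∀ ω, 0 ≤ Y ω) (hYY' : ∀ ω, Y ω ≤ Y' ω ∧ Y' ω ≤ Y ω + C)
    (hrec : (fun ω => (1 + c) * Y ω) ≤ᵐ[μ] μ[Y' | m]) :
    ∫ ω in A, exp (-(l * √(Y' ω))) ∂μ
      ≤ ∫ ω in A, (exp (-(l * √(Y ω))) - c * (chordSlope l C (Y ω) * Y ω)) ∂μ := by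
  set β := fun ω => chordSlope l C (Y ω)
  have hβ : Measurable[m] β := (continuous_chordSlope l C).measurable.comp hY
  have hYm : AEStronglyMeasurable Y μ := hYint.aestronglyMeasurable
  have hcond : ∫ ω in A, β ω * ((1 + c) * Y ω) ∂μ ≤ ∫ ω in A, β ω * Y' ω ∂μ :=
    setIntegral_mul_le_of_le_condExp hm hA hβ.stronglyMeasurable
      (fun ω => chordSlope_nonneg hl hC _) (fun ω => chordSlope_le hl hC)
      (hYint.const_mul _) hY'int hrec
  have hβY' := integrable_chordSlope_mul hl hC hYm hY'int
  have hβcY := integrable_chordSlope_mul hl hC hYm (hYint.const_mul (1 + c))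
  have hbound : Integrable (fun ω => exp (-(l * √(Y ω))) - c * (β ω * Y ω)) μ :=
    (integrable_exp_neg_mul_sqrt hl hYm).sub
      ((integrable_chordSlope_mul hl hC hYm hYint).const_mul c)
  have hdefect : Integrable (fun ω => β ω * Y' ω - β ω * ((1 + c) * Y ω)) μ := hβY'.sub hβcY
  calc ∫ ω in A, exp (-(l * √(Y' ω))) ∂μ
      ≤ ∫ ω in A, ((exp (-(l * √(Y ω))) - c * (β ω * Y ω))
          - (β ω * Y' ω - β ω * ((1 + c) * Y ω))) ∂μ := by
        refine setIntegral_mono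
          (integrable_exp_neg_mul_sqrt hl hY'int.aestronglyMeasurable).integrableOn
          (hbound.sub hdefect).integrableOn fun ω => ?_
        have h := exp_neg_mul_sqrt_le_chord hl hC (hY0 ω) (sub_nonneg.2 (hYY' ω).1)
          (by linarith [(hYY' ω).2])
        rw [add_sub_cancel] at h
        linarith
    _ = ∫ ω in A, (exp (-(l * √(Y ω))) - c * (β ω * Y ω)) ∂μ
          - (∫ ω in A, β ω * Y' ω ∂μ - ∫ ω in A, β ω * ((1 + c) * Y ω) ∂μ) := by
        rw [integral_sub hbound.integrableOn hdefect.integrableOn,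
          integral_sub hβY'.integrableOn hβcY.integrableOn]
    _ ≤ ∫ ω in A, (exp (-(l * √(Y ω))) - c * (β ω * Y ω)) ∂μ := by linarith

lemma setIntegral_exp_sqrt_gap_succ_le [IsFiniteMeasure μ] (hm : m ≤ m0) {A : Set Ω}
    (hA : MeasurableSet[m] A) {C r0 g c b : ℝ} (hC : 0 < C) (hr0 : 0 < r0) (hg : 0 < g)
    (hc : 0 ≤ c) (hb : 0 ≤ b) {Y Y' : Ω → ℝ}
    (hY : Measurable[m] Y) (hYint : Integrable Y μ) (hY'int : Integrable Y' μ)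
    (hYr0 : ∀ ω, r0 ^ 2 ≤ Y ω) (hYY' : ∀ ω, Y ω ≤ Y' ω ∧ Y' ω ≤ Y ω + C)
    (hrec : (fun ω => (1 + c) * Y ω) ≤ᵐ[μ] μ[Y' | m])
    (hbar : ∀ ω ∈ A, b + (C / (2 * r0) + g / 2) ≤ √(Y ω)) :
    ∫ ω in A, exp (g / C * (b * √(1 + c) - √(Y' ω))) ∂μ
      ≤ ∫ ω in A, exp (g / C * (b - √(Y ω))) ∂μ := by
  set l := g / C
  have hl : 0 ≤ l := by positivity
  have hY0 : ∀ ω, 0 ≤ Y ω := fun ω => (sq_nonneg r0).trans (hYr0 ω)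
  have hYm : AEStronglyMeasurable Y μ := hYint.aestronglyMeasurable
  have hbound : Integrable (fun ω => exp (-(l * √(Y ω))) - c * (chordSlope l C (Y ω) * Y ω)) μ :=
    (integrable_exp_neg_mul_sqrt hl hYm).sub
      ((integrable_chordSlope_mul hl hC hYm hYint).const_mul c)
  have hgap : Integrable (fun ω => exp (l * (b - √(Y ω)))) μ := by
    refine .of_bound (by fun_prop) (exp (l * b)) (ae_of_all _ fun ω => ?_)
    rw [norm_of_nonneg (exp_pos _).le, exp_le_exp]
    have := sqrt_nonneg (Y ω)
    nlinarith
  calc ∫ ω in A, exp (l * (b * √(1 + c) - √(Y' ω))) ∂μ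
      = exp (l * (b * √(1 + c))) * ∫ ω in A, exp (-(l * √(Y' ω))) ∂μ := by
        rw [← integral_const_mul]
        congr with ω
        rw [← exp_add]; ring_nf
    _ ≤ exp (l * (b * √(1 + c)))
          * ∫ ω in A, (exp (-(l * √(Y ω))) - c * (chordSlope l C (Y ω) * Y ω)) ∂μ :=
        mul_le_mul_of_nonneg_left
          (setIntegral_exp_neg_sqrt_le hm hA hl hC hY hYint hY'int hY0 hYY' hrec) (exp_pos _).le
    _ = ∫ ω in A, exp (l * (b * √(1 + c)))
          * (exp (-(l * √(Y ω))) - c * (chordSlope l C (Y ω) * Y ω)) ∂μ :=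
        (integral_const_mul _ _).symm
    _ ≤ ∫ ω in A, exp (l * (b - √(Y ω))) ∂μ :=
        setIntegral_mono_on (hbound.const_mul _).integrableOn hgap.integrableOn (hm A hA)
          fun ω hω => exp_mul_sub_chordSlope_le hC hr0 hg hc (hYr0 ω) hb (hbar ω hω)

lemma integral_stoppedProcess_succ_le {τ : Ω → WithTop ℕ} {Z : ℕ → Ω → ℝ} {n : ℕ}
    (hτ : MeasurableSet {ω | τ ω ≤ n}) (hint : ∀ k, Integrable (stoppedProcess Z τ k) μ)
    (hstep : ∫ ω in {ω | τ ω ≤ n}ᶜ, Z (n + 1) ω ∂μ ≤ ∫ ω in {ω | τ ω ≤ n}ᶜ, Z n ω ∂μ) :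
    ∫ ω, stoppedProcess Z τ (n + 1) ω ∂μ ≤ ∫ ω, stoppedProcess Z τ n ω ∂μ := by
  have hstopped : ∀ ω ∈ {ω | τ ω ≤ n}, stoppedProcess Z τ (n + 1) ω = stoppedProcess Z τ n ω :=
    fun ω hω => by
      rw [stoppedProcess_eq_of_ge (i := n) hω,
        stoppedProcess_eq_of_ge (hω.trans (WithTop.coe_le_coe.2 n.le_succ))]
  have hrunning : ∀ ω ∈ {ω | τ ω ≤ n}ᶜ,
      stoppedProcess Z τ (n + 1) ω = Z (n + 1) ω ∧ stoppedProcess Z τ n ω = Z n ω := by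
    intro ω hω
    have hlt : (n : WithTop ℕ) < τ ω := not_le.1 hω
    exact ⟨stoppedProcess_eq_of_le (ENat.natCast_add_one_le_iff.2 hlt),
      stoppedProcess_eq_of_le hlt.le⟩
  rw [← integral_add_compl hτ (hint (n + 1)), ← integral_add_compl hτ (hint n),
    setIntegral_congr_fun hτ hstopped,
    setIntegral_congr_fun hτ.compl fun ω hω => (hrunning ω hω).1,
    setIntegral_congr_fun hτ.compl fun ω hω => (hrunning ω hω).2]
  linarith

lemma maximal_ineq_of_setIntegral_succ_le [IsFiniteMeasure μ] {ℱ : Filtration ℕ m0}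
    {Z : ℕ → Ω → ℝ} {N : ℕ} {a : ℝ} (ha : 0 < a) (hZ : Adapted ℱ Z) (hZ0 : ∀ n ω, 0 ≤ Z n ω)
    (hZint : ∀ n, Integrable (Z n) μ)
    (hstep : ∀ n, N ≤ n → ∀ A, MeasurableSet[ℱ n] A → (∀ ω ∈ A, Z n ω < a) →
      ∫ ω in A, Z (n + 1) ω ∂μ ≤ ∫ ω in A, Z n ω ∂μ) :
    μ {ω | ∃ n, N ≤ n ∧ a ≤ Z n ω} ≤ ENNReal.ofReal ((∫ ω, Z N ω ∂μ) / a) := by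
  set τ := hittingAfter Z (Set.Ici a) N
  have hτ : IsStoppingTime ℱ τ := hZ.isStoppingTime_hittingAfter measurableSet_Ici
  have hYint : ∀ n, Integrable (stoppedProcess Z τ n) μ := integrable_stoppedProcess hτ hZint
  have hYN : stoppedProcess Z τ N = Z N :=
    funext fun ω => stoppedProcess_eq_of_le (le_hittingAfter ω)
  have hanti : ∀ n, N ≤ n → ∫ ω, stoppedProcess Z τ n ω ∂μ ≤ ∫ ω, Z N ω ∂μ := by
    intro n hn
    induction n, hn using Nat.le_induction with
    | base => rw [hYN]
    | succ n hn ih =>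
      have hτn := hτ.measurableSet_le n
      refine (integral_stoppedProcess_succ_le (ℱ.le n _ hτn) hYint
        (hstep n hn _ hτn.compl fun ω hω => ?_)).trans ih
      exact not_le.1 (notMem_of_lt_hittingAfter (not_le.1 hω) hn)
  have hhit : ∀ n, μ {ω | τ ω ≤ ↑(N + n)} ≤ ENNReal.ofReal ((∫ ω, Z N ω ∂μ) / a) := by
    intro n
    have hsub : {ω | τ ω ≤ ↑(N + n)} ⊆ {ω | a ≤ stoppedProcess Z τ (N + n) ω} := fun ω hω => by
      rw [Set.mem_ofPred_eq, stoppedProcess_eq_of_ge (i := N + n) hω]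
      exact hittingAfter_mem_set_of_ne_top (ne_top_of_le_ne_top WithTop.coe_ne_top hω)
    have hmarkov : a * μ.real {ω | a ≤ stoppedProcess Z τ (N + n) ω}
        ≤ ∫ ω, stoppedProcess Z τ (N + n) ω ∂μ :=
      mul_meas_ge_le_integral_of_nonneg (ae_of_all _ fun ω => hZ0 _ ω) (hYint (N + n)) a
    calc μ {ω | τ ω ≤ ↑(N + n)} ≤ μ {ω | a ≤ stoppedProcess Z τ (N + n) ω} := measure_mono hsub
      _ = ENNReal.ofReal (μ.real {ω | a ≤ stoppedProcess Z τ (N + n) ω}) := by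
        rw [ofReal_measureReal]
      _ ≤ ENNReal.ofReal ((∫ ω, Z N ω ∂μ) / a) := by
        refine ENNReal.ofReal_le_ofReal ?_
        rw [le_div_iff₀' ha]
        linarith [hanti (N + n) (Nat.le_add_right N n)]
  calc μ {ω | ∃ n, N ≤ n ∧ a ≤ Z n ω} ≤ μ (⋃ n, {ω | τ ω ≤ ↑(N + n)}) := by
        refine measure_mono fun ω ⟨k, hk, hak⟩ => Set.mem_iUnion.2 ⟨k - N, ?_⟩
        rw [Set.mem_ofPred_eq, Nat.add_sub_cancel' hk]
        exact hittingAfter_le_of_mem hk hak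
    _ = ⨆ n, μ {ω | τ ω ≤ ↑(N + n)} :=
        Monotone.measure_iUnion fun i j hij ω hω =>
          hω.trans (WithTop.coe_le_coe.2 (Nat.add_le_add_left hij N))
    _ ≤ ENNReal.ofReal ((∫ ω, Z N ω ∂μ) / a) := iSup_le hhit

lemma le_apply_of_le_succ {X : ℕ → Ω → ℝ} {N : ℕ} (hinc : ∀ i, N ≤ i → ∀ ω, X i ω ≤ X (i + 1) ω)
    {n : ℕ} (hn : N ≤ n) (ω : Ω) : X N ω ≤ X n ω :=
  monotoneOn_nat_Ici_of_le_succ (f := fun n => X n ω) (fun k hk => hinc k hk ω) (le_refl N) hn hn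

lemma measure_exists_le_mul_prod_le [IsProbabilityMeasure μ] {ℱ : Filtration ℕ m0}
    {X : ℕ → Ω → ℝ} {N : ℕ} {C : ℝ} (hC : 0 < C) {c : ℕ → ℝ} (hc : ∀ i, 0 ≤ c i)
    (hadapt : Adapted ℱ X) (hint : ∀ i, Integrable (X i) μ)
    (hrec : ∀ i, N ≤ i → (fun ω => (1 + c i) * X i ω) ≤ᵐ[μ] μ[X (i + 1) | ℱ i])
    (hinc : ∀ i, N ≤ i → ∀ ω, X i ω ≤ X (i + 1) ω ∧ X (i + 1) ω ≤ X i ω + C)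
    {x₀ M : ℝ} (hstart : ∀ ω, X N ω = x₀) (hx₀ : 0 < x₀) (hM : M < x₀) :
    μ {ω | ∃ n, N ≤ n ∧ X n ω ≤ M * ∏ i ∈ Ico N n, (1 + c i)}
      ≤ ENNReal.ofReal (exp (-((√x₀ - √M) / C
          * ((√x₀ - √M) - (C / (2 * √x₀) + (√x₀ - √M) / 2))))) := by
  set r0 := √x₀
  set g := r0 - √M
  set Ec := C / (2 * r0) + g / 2
  set b := fun n => √(M * ∏ i ∈ Ico N n, (1 + c i))
  set Z := fun n ω => exp (g / C * (b n - √(X n ω)))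
  have hr0 : 0 < r0 := sqrt_pos.2 hx₀
  have hg : 0 < g := sub_pos.2 ((sqrt_lt_sqrt_iff_of_pos hx₀).2 hM)
  have hZadapt : Adapted ℱ Z := fun n =>
    (((hadapt n).sqrt.const_sub (b n)).const_mul (g / C)).exp
  have hZint : ∀ n, Integrable (Z n) μ := fun n => by
    refine .of_bound ((hZadapt n).mono (ℱ.le n) le_rfl).aestronglyMeasurable (exp (g / C * b n))
      (ae_of_all _ fun ω => ?_)
    rw [norm_of_nonneg (exp_pos _).le, exp_le_exp]
    have := sqrt_nonneg (X n ω)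
    have : 0 < g / C := by positivity
    nlinarith
  have hstep : ∀ n, N ≤ n → ∀ A, MeasurableSet[ℱ n] A → (∀ ω ∈ A, Z n ω < exp (-(g / C * Ec))) →
      ∫ ω in A, Z (n + 1) ω ∂μ ≤ ∫ ω in A, Z n ω ∂μ := by
    intro n hn A hA hAZ
    have hb : b (n + 1) = b n * √(1 + c n) := by
      simp only [b]; rw [prod_Ico_succ_top hn, ← mul_assoc, sqrt_mul' _ (by linarith [hc n])]
    simp only [Z, hb]
    refine setIntegral_exp_sqrt_gap_succ_le (ℱ.le n) hA hC hr0 hg (hc n) (sqrt_nonneg _)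
      (hadapt n) (hint n) (hint (n + 1)) (fun ω => ?_) (hinc n hn) (hrec n hn) fun ω hω => ?_
    · rw [sq_sqrt hx₀.le, ← hstart ω]
      exact le_apply_of_le_succ (fun i hi ω => (hinc i hi ω).1) hn ω
    · have h := exp_lt_exp.1 (hAZ ω hω)
      rw [← mul_neg] at h
      show b n + Ec ≤ √(X n ω)
      linarith [lt_of_mul_lt_mul_left h (div_pos hg hC).le]
  have hZN : ∫ ω, Z N ω ∂μ = exp (-(g / C * g)) := by
    simp only [Z, b, hstart, Ico_self, prod_empty, mul_one, integral_const, probReal_univ,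
      one_smul]
    congr 1; ring
  calc μ {ω | ∃ n, N ≤ n ∧ X n ω ≤ M * ∏ i ∈ Ico N n, (1 + c i)}
      ≤ μ {ω | ∃ n, N ≤ n ∧ exp (-(g / C * Ec)) ≤ Z n ω} := by
        refine measure_mono fun ω ⟨n, hn, hX⟩ => ⟨n, hn, exp_le_exp.2 ?_⟩
        have := sqrt_le_sqrt hX
        have : 0 ≤ Ec := by positivity
        have : 0 < g / C := by positivity
        nlinarith
    _ ≤ ENNReal.ofReal ((∫ ω, Z N ω ∂μ) / exp (-(g / C * Ec))) :=
        maximal_ineq_of_setIntegral_succ_le (exp_pos _) hZadapt (fun _ _ => (exp_pos _).le)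
          hZint hstep
    _ = _ := by rw [hZN, ← exp_sub]; ring_nf

lemma eq_zero_of_increment_lt_one [IsProbabilityMeasure μ] {ℱ : Filtration ℕ m0}
    {X : ℕ → Ω → ℝ} {N : ℕ} {C : ℝ} (hC : C < 1) {c : ℕ → ℝ} (hc : ∀ i, 0 ≤ c i)
    (hrec : ∀ i, N ≤ i → (fun ω => (1 + c i) * X i ω) ≤ᵐ[μ] μ[X (i + 1) | ℱ i])
    (hinc : ∀ i ω, N ≤ i →
      X (i + 1) ω = X i ω ∨ (X i ω + 1 ≤ X (i + 1) ω ∧ X (i + 1) ω ≤ X i ω + C))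
    {x₀ : ℝ} (hstart : ∀ ω, X N ω = x₀) (hx₀ : 0 < x₀) {i : ℕ} (hi : N ≤ i) : c i = 0 := by
  have hconst : ∀ n, N ≤ n → X n = fun _ => x₀ := by
    intro n hn
    induction n, hn using Nat.le_induction with
    | base => exact funext hstart
    | succ n hn ih =>
      funext ω
      rcases hinc n ω hn with h | h
      · rw [h, ih]
      · linarith
  have h := hrec i hi
  rw [hconst (i + 1) (hi.trans i.le_succ), hconst i hi, condExp_const (ℱ.le i)] at h
  obtain ⟨ω, hω⟩ := h.exists
  have : c i * x₀ ≤ 0 := by linarith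
  exact le_antisymm (nonpos_of_mul_nonpos_left this hx₀) (hc i)

end Measure

/-- Lemma 5.2 (me4): exponential maximal lower bound for a process with
multiplicative conditional growth and bounded jumps, started at the constant `x₀ = X_N > 0`. -/
theorem maximal_lower_bound_me4
    {Ω : Type*} {m0 : MeasurableSpace Ω} (μ : Measure Ω) [IsProbabilityMeasure μ]
    (ℱ : Filtration ℕ m0) (X : ℕ → Ω → ℝ) (N : ℕ)
    (C : ℝ) (hC : 0 < C) (c : ℕ → ℝ) (hc : ∀ i, 0 ≤ c i)
    (hadapt : Adapted ℱ X) (hint : ∀ i, Integrable (X i) μ)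
    (hrec : ∀ i, N ≤ i → (fun ω => (1 + c i) * X i ω) ≤ᵐ[μ] μ[X (i + 1) | ℱ i])
    (hinc : ∀ i ω, N ≤ i →
      X (i + 1) ω = X i ω ∨ (X i ω + 1 ≤ X (i + 1) ω ∧ X (i + 1) ω ≤ X i ω + C))
    (x₀ M : ℝ) (hstart : ∀ ω, X N ω = x₀) (hx₀ : 0 < x₀)
    (hM : M ≤ x₀ - 8 * C ^ 2) :
    μ {ω | ∃ n, N ≤ n ∧ X n ω ≤ M * ∏ i ∈ Finset.Ico N n, (1 + c i)}
      ≤ ENNReal.ofReal (2 * Real.exp (-(M - x₀) ^ 2 / (16 * x₀ * C ^ 2))) := by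
  have hinc' : ∀ i, N ≤ i → ∀ ω, X i ω ≤ X (i + 1) ω ∧ X (i + 1) ω ≤ X i ω + C := by
    intro i hi ω
    rcases hinc i ω hi with h | h
    · exact ⟨h.ge, by linarith⟩
    · exact ⟨by linarith [h.1], h.2⟩
  have hempty : (∀ n, N ≤ n → M * ∏ i ∈ Ico N n, (1 + c i) < x₀) →
      {ω | ∃ n, N ≤ n ∧ X n ω ≤ M * ∏ i ∈ Ico N n, (1 + c i)} = ∅ := fun h =>
    Set.eq_empty_of_forall_notMem fun ω ⟨n, hn, hX⟩ => (hX.trans_lt (h n hn)).not_ge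
      (hstart ω ▸ le_apply_of_le_succ (fun i hi ω => (hinc' i hi ω).1) hn ω)
  rcases le_or_gt M 0 with hM0 | hM0
  · rw [hempty fun n _ => (mul_nonpos_of_nonpos_of_nonneg hM0
      (prod_nonneg fun i _ => by linarith [hc i])).trans_lt hx₀, measure_empty]
    exact bot_le
  rcases lt_or_ge C 1 with hC1 | hC1
  · have hprod : ∀ n, ∏ i ∈ Ico N n, (1 + c i) = 1 := fun n => prod_eq_one fun i hi => by
      rw [eq_zero_of_increment_lt_one hC1 hc hrec hinc hstart hx₀ (mem_Ico.1 hi).1, add_zero]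
    rw [hempty fun n _ => by nlinarith [hprod n], measure_empty]
    exact bot_le
  have hexponent := sq_sub_sq_div_le (C := C) (r0 := √x₀) (s := √M) (by linarith)
    (sqrt_nonneg M) (sqrt_pos.2 hx₀) (by rw [sq_sqrt hM0.le, sq_sqrt hx₀.le]; linarith)
  rw [sq_sqrt hM0.le, sq_sqrt hx₀.le] at hexponent
  refine (measure_exists_le_mul_prod_le hC hc hadapt hint hrec hinc' hstart hx₀
    (by nlinarith)).trans (ENNReal.ofReal_le_ofReal ?_)
  calc exp _ ≤ exp (-(M - x₀) ^ 2 / (16 * x₀ * C ^ 2)) := exp_le_exp.2 (by rw [neg_div]; linarith)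
    _ ≤ 2 * exp (-(M - x₀) ^ 2 / (16 * x₀ * C ^ 2)) :=
        le_mul_of_one_le_left (exp_pos _).le one_le_two
end

section
/- For δ > 0, as n → ∞, the triple sum ∑_{1 ≤ r < s < t ≤ n} r^{−2/(2+δ)} s^{−1} t^{−(2+2δ)/(2+δ)} equals ((2+δ)/δ)² log n + O(1). -/
/-!
Put `β = δ / (2 + δ) ∈ (0, 1)`, so that the summand is `r^(β-1) s⁻¹ t^(-1-β)` and the
constant is `β⁻²`. Concavity of `x ↦ x^β` (Bernoulli's inequality) squeezes the increments
of `s^β` between `β (s+1)^(β-1)` and `β s^(β-1)`, so `∑_{r<s} r^(β-1) = s^β/β + O(1)`.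
Dividing by `s` and summing, `∑_{s<t} s⁻¹ ∑_{r<s} r^(β-1) = t^β/β² + O(log t)`. The outer
summand is therefore `β⁻²/t + O((1 + log t) t^(-1-β))`; the error terms are summable and the
harmonic sum is `log n + O(1)`.
-/

open Finset Real

lemma abs_sum_Icc_inv_sub_log_le (n : ℕ) : |∑ t ∈ Icc 1 n, (t : ℝ)⁻¹ - log n| ≤ 1 := by
  have hharmonic : (harmonic n : ℝ) = ∑ t ∈ Icc 1 n, (t : ℝ)⁻¹ := by
    simp [harmonic_eq_sum_Icc]
  have hlog : log n ≤ log (n + 1 : ℕ) := by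
    rcases n.eq_zero_or_pos with rfl | hn
    · simp
    · exact log_le_log (by exact_mod_cast hn) (by norm_cast; omega)
  rw [← hharmonic, abs_le]
  constructor <;> linarith [log_add_one_le_harmonic n, harmonic_le_one_add_log n]

lemma sum_Ico_inv_le_one_add_log (n : ℕ) : ∑ s ∈ Ico 1 n, (s : ℝ)⁻¹ ≤ 1 + log n :=
  calc ∑ s ∈ Ico 1 n, (s : ℝ)⁻¹ ≤ ∑ s ∈ Icc 1 n, (s : ℝ)⁻¹ :=
        sum_le_sum_of_subset_of_nonneg Ico_subset_Icc_self fun s _ _ => by positivity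
    _ ≤ 1 + log n := by simpa [harmonic_eq_sum_Icc] using harmonic_le_one_add_log n

lemma summable_log_mul_rpow {p : ℝ} (hp : p < -1) :
    Summable fun n : ℕ => log n * (n : ℝ) ^ p := by
  set ε := (-1 - p) / 2
  have hε : 0 < ε := by simp only [ε]; linarith
  refine Summable.of_nonneg_of_le (fun n => by positivity [log_natCast_nonneg n]) (fun n => ?_)
    ((summable_nat_rpow.mpr (by simp only [ε]; linarith : p + ε < -1)).div_const ε)
  calc log n * (n : ℝ) ^ p ≤ (n : ℝ) ^ ε / ε * (n : ℝ) ^ p := by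
        gcongr; exact log_le_rpow_div n.cast_nonneg hε
    _ = (n : ℝ) ^ (p + ε) / ε := by
        rw [rpow_add' n.cast_nonneg (by simp only [ε]; linarith)]; ring

lemma exists_abs_sum_Icc_sub_mul_log_le {a b : ℕ → ℝ} {c : ℝ} (hb : Summable b)
    (hab : ∀ t, 1 ≤ t → |a t - c / t| ≤ b t) :
    ∃ C, ∀ n : ℕ, |∑ t ∈ Icc 1 n, a t - c * log n| ≤ C := by
  refine ⟨∑' t, |b t| + |c|, fun n => ?_⟩
  have herror : |∑ t ∈ Icc 1 n, (a t - c / t)| ≤ ∑' t, |b t| :=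
    calc |∑ t ∈ Icc 1 n, (a t - c / t)| ≤ ∑ t ∈ Icc 1 n, |b t| :=
          (abs_sum_le_sum_abs _ _).trans <| sum_le_sum fun t ht =>
            (hab t (mem_Icc.mp ht).1).trans (le_abs_self _)
      _ ≤ ∑' t, |b t| := hb.abs.sum_le_tsum _ fun t _ => abs_nonneg _
  have hharmonic : |c * (∑ t ∈ Icc 1 n, (t : ℝ)⁻¹ - log n)| ≤ |c| := by
    rw [abs_mul]; exact mul_le_of_le_one_right (abs_nonneg c) (abs_sum_Icc_inv_sub_log_le n)
  have hsplit : ∑ t ∈ Icc 1 n, a t - c * log n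
      = ∑ t ∈ Icc 1 n, (a t - c / t) + c * (∑ t ∈ Icc 1 n, (t : ℝ)⁻¹ - log n) := by
    simp only [sum_sub_distrib, mul_sub, mul_sum, div_eq_mul_inv]; ring
  rw [hsplit]
  exact (abs_add_le _ _).trans (add_le_add herror hharmonic)

section

variable {β : ℝ}

lemma add_one_rpow_sub_rpow_le (hβ0 : 0 ≤ β) (hβ1 : β ≤ 1) {x : ℝ} (hx : 0 < x) :
    (x + 1) ^ β - x ^ β ≤ β * x ^ (β - 1) := by
  have hbern := rpow_one_add_le_one_add_mul_self (by linarith [inv_pos.mpr hx] : (-1 : ℝ) ≤ x⁻¹)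
    hβ0 hβ1
  have hsplit : x + 1 = x * (1 + x⁻¹) := by field_simp
  calc (x + 1) ^ β - x ^ β = x ^ β * ((1 + x⁻¹) ^ β - 1) := by
        rw [hsplit, mul_rpow hx.le (by positivity)]; ring
    _ ≤ x ^ β * (β * x⁻¹) := by gcongr; linarith
    _ = β * x ^ (β - 1) := by rw [rpow_sub_one hx.ne']; ring

lemma mul_add_one_rpow_le_add_one_rpow_sub_rpow (hβ0 : 0 ≤ β) (hβ1 : β ≤ 1) {x : ℝ}
    (hx : 0 ≤ x) : β * (x + 1) ^ (β - 1) ≤ (x + 1) ^ β - x ^ β := by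
  have hx1 : 0 < x + 1 := by linarith
  have hinv : (x + 1)⁻¹ ≤ 1 := inv_le_one_of_one_le₀ (by linarith)
  have hbern := rpow_one_add_le_one_add_mul_self (by linarith : (-1 : ℝ) ≤ -(x + 1)⁻¹) hβ0 hβ1
  have hsplit : x = (x + 1) * (1 + -(x + 1)⁻¹) := by field_simp; ring
  calc β * (x + 1) ^ (β - 1) = (x + 1) ^ β * (β * (x + 1)⁻¹) := by
        rw [rpow_sub_one hx1.ne']; ring
    _ ≤ (x + 1) ^ β * (1 - (1 + -(x + 1)⁻¹) ^ β) := by gcongr; linarith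
    _ = (x + 1) ^ β - x ^ β := by
        rw [mul_sub, mul_one, ← mul_rpow hx1.le (by linarith), ← hsplit]

lemma rpow_sub_one_le_mul_sum_Ico_rpow (hβ0 : 0 ≤ β) (hβ1 : β ≤ 1) (n : ℕ) :
    (n : ℝ) ^ β - 1 ≤ β * ∑ r ∈ Ico 1 n, (r : ℝ) ^ (β - 1) := by
  induction n with
  | zero => simp [zero_rpow_le_one]
  | succ n ih =>
    rcases Nat.eq_zero_or_pos n with rfl | hn
    · simp
    · have hstep := add_one_rpow_sub_rpow_le hβ0 hβ1 (Nat.cast_pos.mpr hn)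
      rw [sum_Ico_succ_top hn, mul_add]
      push_cast
      linarith

lemma mul_sum_Icc_rpow_le_rpow (hβ0 : 0 ≤ β) (hβ1 : β ≤ 1) (n : ℕ) :
    β * ∑ r ∈ Icc 1 n, (r : ℝ) ^ (β - 1) ≤ (n : ℝ) ^ β := by
  induction n with
  | zero => simp [zero_rpow_nonneg]
  | succ n ih =>
    have hstep := mul_add_one_rpow_le_add_one_rpow_sub_rpow hβ0 hβ1 n.cast_nonneg
    rw [sum_Icc_succ_top (by omega), mul_add]
    push_cast
    linarith

lemma abs_sum_Ico_rpow_sub_le (hβ0 : 0 < β) (hβ1 : β ≤ 1) (n : ℕ) :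
    |∑ r ∈ Ico 1 n, (r : ℝ) ^ (β - 1) - (n : ℝ) ^ β / β| ≤ β⁻¹ := by
  have hlower := rpow_sub_one_le_mul_sum_Ico_rpow hβ0.le hβ1 n
  have hupper : β * ∑ r ∈ Ico 1 n, (r : ℝ) ^ (β - 1) ≤ (n : ℝ) ^ β :=
    (mul_le_mul_of_nonneg_left (sum_le_sum_of_subset_of_nonneg Ico_subset_Icc_self
      fun r _ _ => by positivity) hβ0.le).trans (mul_sum_Icc_rpow_le_rpow hβ0.le hβ1 n)
  have hscale : ∑ r ∈ Ico 1 n, (r : ℝ) ^ (β - 1) - (n : ℝ) ^ β / β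
      = β⁻¹ * (β * ∑ r ∈ Ico 1 n, (r : ℝ) ^ (β - 1) - (n : ℝ) ^ β) := by
    field_simp
  rw [hscale, abs_mul, abs_of_pos (inv_pos.mpr hβ0)]
  refine mul_le_of_le_one_right (inv_pos.mpr hβ0).le (abs_le.mpr ⟨?_, ?_⟩) <;> linarith

lemma abs_sum_Ico_inv_mul_sum_Ico_rpow_sub_le (hβ0 : 0 < β) (hβ1 : β ≤ 1) (n : ℕ) :
    |∑ s ∈ Ico 1 n, (s : ℝ)⁻¹ * ∑ r ∈ Ico 1 s, (r : ℝ) ^ (β - 1) - (n : ℝ) ^ β / β ^ 2|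
      ≤ (β⁻¹ + 1 + log n) / β := by
  set E : ℕ → ℝ := fun s => ∑ r ∈ Ico 1 s, (r : ℝ) ^ (β - 1) - (s : ℝ) ^ β / β with hE
  have hinv : 0 ≤ β⁻¹ := (inv_pos.mpr hβ0).le
  have hterm : ∀ s ∈ Ico 1 n, (s : ℝ)⁻¹ * ∑ r ∈ Ico 1 s, (r : ℝ) ^ (β - 1)
      = (s : ℝ)⁻¹ * E s + β⁻¹ * (s : ℝ) ^ (β - 1) := fun s hs => by
    have hs : (s : ℝ) ≠ 0 := by have := (mem_Ico.mp hs).1; positivity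
    rw [hE, rpow_sub_one hs]; ring
  have hsplit : ∑ s ∈ Ico 1 n, (s : ℝ)⁻¹ * ∑ r ∈ Ico 1 s, (r : ℝ) ^ (β - 1) - (n : ℝ) ^ β / β ^ 2
      = ∑ s ∈ Ico 1 n, (s : ℝ)⁻¹ * E s + β⁻¹ * E n := by
    rw [sum_congr rfl hterm, sum_add_distrib, ← mul_sum, hE]; ring
  have hsum : |∑ s ∈ Ico 1 n, (s : ℝ)⁻¹ * E s| ≤ β⁻¹ * (1 + log n) :=
    calc |∑ s ∈ Ico 1 n, (s : ℝ)⁻¹ * E s| ≤ ∑ s ∈ Ico 1 n, β⁻¹ * (s : ℝ)⁻¹ :=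
          (abs_sum_le_sum_abs _ _).trans <| sum_le_sum fun s _ => by
            rw [abs_mul, abs_inv, Nat.abs_cast, mul_comm]
            gcongr; exact abs_sum_Ico_rpow_sub_le hβ0 hβ1 s
      _ ≤ β⁻¹ * (1 + log n) := by rw [← mul_sum]; gcongr; exact sum_Ico_inv_le_one_add_log n
  have hlast : |β⁻¹ * E n| ≤ β⁻¹ * β⁻¹ := by
    rw [abs_mul, abs_of_nonneg hinv]; gcongr; exact abs_sum_Ico_rpow_sub_le hβ0 hβ1 n
  rw [hsplit]
  calc _ ≤ β⁻¹ * (1 + log n) + β⁻¹ * β⁻¹ := (abs_add_le _ _).trans (add_le_add hsum hlast)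
    _ = (β⁻¹ + 1 + log n) / β := by ring

theorem exists_abs_triple_sum_sub_log_le (hβ0 : 0 < β) (hβ1 : β ≤ 1) :
    ∃ C, ∀ n : ℕ, |∑ t ∈ Icc 1 n, ∑ s ∈ Ico 1 t, ∑ r ∈ Ico 1 s,
        (r : ℝ) ^ (β - 1) * (s : ℝ)⁻¹ * (t : ℝ) ^ (-1 - β) - β⁻¹ ^ 2 * log n| ≤ C := by
  have hp : -1 - β < -1 := by linarith
  have hb : Summable fun t : ℕ => (β⁻¹ + 1 + log t) / β * (t : ℝ) ^ (-1 - β) := by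
    have := ((summable_nat_rpow.mpr hp).mul_left ((β⁻¹ + 1) / β)).add
      ((summable_log_mul_rpow hp).mul_left β⁻¹)
    exact this.congr fun t => by ring
  refine exists_abs_sum_Icc_sub_mul_log_le hb fun t ht => ?_
  have htpos : (0 : ℝ) < t := by exact_mod_cast ht
  have hfactor : ∑ s ∈ Ico 1 t, ∑ r ∈ Ico 1 s, (r : ℝ) ^ (β - 1) * (s : ℝ)⁻¹ * (t : ℝ) ^ (-1 - β)
        - β⁻¹ ^ 2 / t
      = (∑ s ∈ Ico 1 t, (s : ℝ)⁻¹ * ∑ r ∈ Ico 1 s, (r : ℝ) ^ (β - 1) - (t : ℝ) ^ β / β ^ 2)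
        * (t : ℝ) ^ (-1 - β) := by
    have hpow : (t : ℝ) ^ β * (t : ℝ) ^ (-1 - β) = (t : ℝ)⁻¹ := by
      rw [← rpow_add htpos, add_sub_cancel, rpow_neg_one]
    rw [div_eq_mul_inv _ (t : ℝ), ← hpow, sub_mul, sum_mul]
    congr 1
    · exact sum_congr rfl fun s _ => by rw [mul_sum, sum_mul]; exact sum_congr rfl fun r _ => by ring
    · ring
  have htpow : 0 ≤ (t : ℝ) ^ (-1 - β) := rpow_nonneg htpos.le _
  rw [hfactor, abs_mul, abs_of_nonneg htpow]
  exact mul_le_mul_of_nonneg_right (abs_sum_Ico_inv_mul_sum_Ico_rpow_sub_le hβ0 hβ1 t) htpow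

end

/-- The triple sum `∑_{1 ≤ r < s < t ≤ n} r^{-2/(2+δ)} s^{-1} t^{-(2+2δ)/(2+δ)}`
equals `((2+δ)/δ)² log n + O(1)`. -/
theorem triple_sum_log_asymptotics (δ : ℝ) (hδ : 0 < δ) :
    ∃ C : ℝ, ∀ n : ℕ, 2 ≤ n →
      |(∑ t ∈ Finset.Icc 1 n, ∑ s ∈ Finset.Ico 1 t, ∑ r ∈ Finset.Ico 1 s,
          (r : ℝ) ^ (-(2 / (2 + δ))) * (s : ℝ)⁻¹ * (t : ℝ) ^ (-((2 + 2 * δ) / (2 + δ))))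
        - ((2 + δ) / δ) ^ 2 * Real.log n| ≤ C := by
  have h2δ : 0 < 2 + δ := by linarith
  obtain ⟨C, hC⟩ := exists_abs_triple_sum_sub_log_le (β := δ / (2 + δ)) (by positivity)
    (div_le_one_of_le₀ (by linarith) h2δ.le)
  have hr : -(2 / (2 + δ)) = δ / (2 + δ) - 1 := by field_simp; ring
  have ht : -((2 + 2 * δ) / (2 + δ)) = -1 - δ / (2 + δ) := by field_simp; ring
  have hc : (2 + δ) / δ = (δ / (2 + δ))⁻¹ := (inv_div δ (2 + δ)).symm
  refine ⟨C, fun n _ => ?_⟩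
  rw [hr, ht, hc]
  exact hC n
end

section
/- Let A₁, …, A_{n} be events each of probability at most c for some c ∈ (0,1), and let Z be a nonnegative random variable with E[exp(λZ)] ≤ exp(K) for some λ > 0, K ≥ 0. Then E[1_{A_i} Z] ≤ ∫₀^∞ min(c, exp(−λx + K)) dx ≤ c(K + 1 − log c)/λ for each i. -/
/-! By the layer-cake formula, `E[1_A Z] = ∫₀^∞ P(A ∩ {Z > t}) dt`, and the integrand is bounded
both by `P(A) ≤ c` and, through the Chernoff bound, by `P(Z > t) ≤ exp(-λt + K)`. The two bounds
cross at `t₀ = (K - log c)/λ`: integrating `c` up to `t₀` and the exponential tail beyond it gives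
`c t₀ + c/λ = c(K + 1 - log c)/λ`. -/

open MeasureTheory ProbabilityTheory Real Set

section Truncation

variable {α : Type*} [MeasurableSpace α] {μ : Measure α}

lemma MeasureTheory.IntegrableOn.const_min {s : Set α} {c : ℝ} {g : α → ℝ} (hc : 0 ≤ c)
    (hg0 : ∀ x, 0 ≤ g x) (hg : IntegrableOn g s μ) : IntegrableOn (fun x => min c (g x)) s μ :=
  hg.mono' (continuous_const.min continuous_id |>.comp_aestronglyMeasurable
    hg.aestronglyMeasurable) <| ae_of_all _ fun x => by
      rw [Real.norm_of_nonneg (le_min hc (hg0 x))]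
      exact min_le_right _ _

lemma integral_Ioi_const_min_le {c t₀ : ℝ} {g : ℝ → ℝ} (hc : 0 ≤ c) (ht₀ : 0 ≤ t₀)
    (hg0 : ∀ x, 0 ≤ g x) (hg : IntegrableOn g (Ioi 0)) :
    ∫ x in Ioi 0, min c (g x) ≤ c * t₀ + ∫ x in Ioi t₀, g x := by
  have hmin := hg.const_min hc hg0
  rw [← Ioc_union_Ioi_eq_Ioi ht₀, setIntegral_union (Ioc_disjoint_Ioi le_rfl) measurableSet_Ioi
    (hmin.mono_set Ioc_subset_Ioi_self) (hmin.mono_set (Ioi_subset_Ioi ht₀))]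
  refine add_le_add ?_ ?_
  · calc ∫ x in Ioc 0 t₀, min c (g x) ≤ ∫ _ in Ioc 0 t₀, c :=
          setIntegral_mono_on (hmin.mono_set Ioc_subset_Ioi_self)
            (integrableOn_const measure_Ioc_lt_top.ne) measurableSet_Ioc
            fun x _ => min_le_left _ _
      _ = c * t₀ := by simp [ht₀, mul_comm]
  · exact setIntegral_mono_on (hmin.mono_set (Ioi_subset_Ioi ht₀))
      (hg.mono_set (Ioi_subset_Ioi ht₀)) measurableSet_Ioi fun x _ => min_le_right _ _

lemma integral_le_integral_Ioi_of_measureReal_lt_le {ν : Measure α} {Z : α → ℝ} {f : ℝ → ℝ}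
    (hZ : 0 ≤ᵐ[ν] Z) (hZint : Integrable Z ν) (hf : IntegrableOn f (Ioi 0))
    (htail : ∀ t > 0, ν.real {ω | t < Z ω} ≤ f t) :
    ∫ ω, Z ω ∂ν ≤ ∫ t in Ioi 0, f t := by
  rw [hZint.integral_eq_integral_meas_lt hZ]
  exact integral_mono_of_nonneg (ae_of_all _ fun _ => measureReal_nonneg) hf
    ((ae_restrict_iff' measurableSet_Ioi).2 (ae_of_all _ htail))

lemma measureReal_restrict_le_min [IsFiniteMeasure μ] (A s : Set α) :
    (μ.restrict A).real s ≤ min (μ.real A) (μ.real s) :=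
  le_min ((measureReal_mono (subset_univ s)).trans_eq (measureReal_restrict_apply_univ A))
    (ENNReal.toReal_mono (measure_ne_top μ s) (Measure.restrict_le_self s))

end Truncation

lemma integrableOn_exp_neg_mul_add_Ioi {lam : ℝ} (hlam : 0 < lam) (K a : ℝ) :
    IntegrableOn (fun x => exp (-lam * x + K)) (Ioi a) :=
  ((integrableOn_exp_mul_Ioi (neg_lt_zero.2 hlam) a).mul_const (exp K)).congr
    (ae_of_all _ fun _ => (exp_add _ _).symm)

lemma integral_exp_neg_mul_add_Ioi {lam : ℝ} (hlam : 0 < lam) (K a : ℝ) :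
    ∫ x in Ioi a, exp (-lam * x + K) = exp (-lam * a + K) / lam := by
  simp only [exp_add, integral_mul_const, integral_exp_mul_Ioi (neg_lt_zero.2 hlam)]
  field_simp

lemma measureReal_lt_le_exp_of_mgf_le {Ω : Type*} [MeasurableSpace Ω] {μ : Measure Ω}
    [IsFiniteMeasure μ] {Z : Ω → ℝ} {lam K : ℝ} (hlam : 0 ≤ lam)
    (hexpint : Integrable (fun ω => exp (lam * Z ω)) μ) (hmgf : mgf Z μ lam ≤ exp K) (t : ℝ) :
    μ.real {ω | t < Z ω} ≤ exp (-lam * t + K) :=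
  calc μ.real {ω | t < Z ω} ≤ μ.real {ω | t ≤ Z ω} := measureReal_mono fun _ (h : t < _) => h.le
    _ ≤ exp (-lam * t) * mgf Z μ lam := measure_ge_le_exp_mul_mgf t hlam hexpint
    _ ≤ exp (-lam * t + K) := by rw [exp_add]; gcongr

theorem truncated_integral_bound_general
    {Ω : Type*} [MeasurableSpace Ω] (μ : Measure Ω) [IsProbabilityMeasure μ]
    (A : Set Ω) (c : ℝ) (hc0 : 0 < c) (hc1 : c < 1)
    (hAc : (μ A).toReal ≤ c)
    (Z : Ω → ℝ) (hZ : ∀ ω, 0 ≤ Z ω) (lam K : ℝ) (hlam : 0 < lam) (hK : 0 ≤ K)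
    (hZint : Integrable Z μ)
    (hexpint : Integrable (fun ω => Real.exp (lam * Z ω)) μ)
    (hmgf : ∫ ω, Real.exp (lam * Z ω) ∂μ ≤ Real.exp K) :
    (∫ ω in A, Z ω ∂μ) ≤ (∫ x in Set.Ioi (0 : ℝ), min c (Real.exp (-lam * x + K))) ∧
    (∫ x in Set.Ioi (0 : ℝ), min c (Real.exp (-lam * x + K)))
      ≤ c * (K + 1 - Real.log c) / lam := by
  refine ⟨integral_le_integral_Ioi_of_measureReal_lt_le (ae_of_all _ hZ) hZint.restrict
    ((integrableOn_exp_neg_mul_add_Ioi hlam K 0).const_min hc0.le fun _ => (exp_pos _).le)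
    fun t _ => (measureReal_restrict_le_min A _).trans
      (min_le_min hAc (measureReal_lt_le_exp_of_mgf_le hlam.le hexpint hmgf t)), ?_⟩
  set t₀ := (K - log c) / lam with ht₀_def
  have hcross : -lam * t₀ + K = log c := by rw [ht₀_def]; field_simp; ring
  have ht₀ : 0 ≤ t₀ := div_nonneg (by linarith [log_nonpos hc0.le hc1.le]) hlam.le
  calc ∫ x in Ioi 0, min c (exp (-lam * x + K))
      ≤ c * t₀ + ∫ x in Ioi t₀, exp (-lam * x + K) :=
        integral_Ioi_const_min_le hc0.le ht₀ (fun _ => (exp_pos _).le)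
          (integrableOn_exp_neg_mul_add_Ioi hlam K 0)
    _ = c * (K + 1 - log c) / lam := by
        rw [integral_exp_neg_mul_add_Ioi hlam, hcross, exp_log hc0, ht₀_def]
        field_simp
        ring

/-- Key step of Lemma 2.7: for an event `A` with `P(A) ≤ c` and a nonnegative random
variable `Z` with `E[exp(lam·Z)] ≤ exp K`, we have
`E[1_A Z] ≤ ∫₀^∞ min(c, exp(-lam·x + K)) dx ≤ c(K + 1 - log c)/lam`. -/
theorem truncated_integral_bound
    {Ω : Type*} [MeasurableSpace Ω] (μ : Measure Ω) [IsProbabilityMeasure μ]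
    (A : Set Ω) (hA : MeasurableSet A) (c : ℝ) (hc0 : 0 < c) (hc1 : c < 1)
    (hAc : (μ A).toReal ≤ c)
    (Z : Ω → ℝ) (hZ : ∀ ω, 0 ≤ Z ω) (lam K : ℝ) (hlam : 0 < lam) (hK : 0 ≤ K)
    (hZint : Integrable Z μ)
    (hexpint : Integrable (fun ω => Real.exp (lam * Z ω)) μ)
    (hmgf : ∫ ω, Real.exp (lam * Z ω) ∂μ ≤ Real.exp K) :
    (∫ ω in A, Z ω ∂μ) ≤ (∫ x in Set.Ioi (0 : ℝ), min c (Real.exp (-lam * x + K))) ∧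
    (∫ x in Set.Ioi (0 : ℝ), min c (Real.exp (-lam * x + K)))
      ≤ c * (K + 1 - Real.log c) / lam :=
  truncated_integral_bound_general μ A c hc0 hc1 hAc Z hZ lam K hlam hK hZint hexpint hmgf
end

section
/- Let (G_k)_{k≥1} be a sequence of nonnegative integer random variables adapted to a filtration such that G₁ is stochastically dominated by 1 + Binomial(n, p) and, conditioned on F_k, G_{k+1} − G_k is stochastically dominated by Binomial(n, p·G_k). Then for every j ≥ 1, E[exp((2pn+2)^{−(j−1)} G_j)] ≤ exp(2pn+1). -/
/-!
Write `c = 2pn + 2` and `θ_j = c^{-(j-1)}`. Conditionally on `ℱ_k`, the increment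
`G_{k+1} - G_k` is dominated by `Binomial(n, q)` with `q ≤ p G_k`, so its conditional
generating function at `r = e^θ` is at most `(1 - q + q e^θ)^n ≤ exp (2θ p n G_k)` for
`θ ≤ 1`, using `e^θ - 1 ≤ 2θ`. Pulling out the `ℱ_k`-measurable factor `e^{θ G_k}` gives
`E[e^{θ G_{k+1}}] ≤ E[e^{θ (1 + 2pn) G_k}] ≤ E[e^{c θ G_k}]`, which turns the bound for
`θ_j` into the bound for `θ_{j+1} = θ_j / c`. For `j = 1` the same estimate applied to
`G_1 - 1` gives `E[e^{G_1}] ≤ e · (1 - p + p e)^n ≤ exp (2pn + 1)`.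
-/

open MeasureTheory Finset
open scoped Classical

noncomputable section

/-- Upper tail `P(Binomial(n,q) ≥ t)` of a binomial distribution. -/
def binomTail (n : ℕ) (q : ℝ) (t : ℕ) : ℝ :=
  ∑ k ∈ (Finset.range (n + 1)).filter (fun k => t ≤ k),
    (n.choose k : ℝ) * q ^ k * (1 - q) ^ (n - k)

theorem eq_add_sum_range_sub_mul_ite (f : ℕ → ℝ) {x L : ℕ} (hx : x ≤ L) :
    f x = f 0 + ∑ t ∈ range L, (f (t + 1) - f t) * if t + 1 ≤ x then 1 else 0 := by
  have hfilter : (range L).filter (fun t => t + 1 ≤ x) = range x := by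
    ext t; simp only [mem_filter, mem_range]; omega
  simp_rw [mul_ite, mul_one, mul_zero]
  rw [← sum_filter, hfilter, sum_range_sub]
  ring

theorem sum_range_choose_mul_pow_mul_pow_mul_pow (n : ℕ) (q r : ℝ) :
    ∑ k ∈ range (n + 1), (n.choose k : ℝ) * q ^ k * (1 - q) ^ (n - k) * r ^ k
      = (1 - q + q * r) ^ n := by
  rw [show 1 - q + q * r = q * r + (1 - q) by ring, add_pow]
  refine sum_congr rfl fun k _ => ?_
  ring

theorem binomTail_eq_zero_of_lt {n t : ℕ} (q : ℝ) (h : n < t) : binomTail n q t = 0 := by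
  refine sum_eq_zero fun k hk => ?_
  simp only [mem_filter, mem_range] at hk
  omega

theorem binomTail_zero_right (n : ℕ) (q : ℝ) : binomTail n q 0 = 1 := by
  simpa [binomTail] using sum_range_choose_mul_pow_mul_pow_mul_pow n q 1

-- Summation by parts: the right side is `E[f X] - f 0` for `X ~ Binomial(n, q)`.
theorem sum_sub_mul_binomTail_succ (f : ℕ → ℝ) {n L : ℕ} (hL : n ≤ L) (q : ℝ) :
    ∑ t ∈ range L, (f (t + 1) - f t) * binomTail n q (t + 1)
      = ∑ k ∈ range (n + 1), (n.choose k : ℝ) * q ^ k * (1 - q) ^ (n - k) * (f k - f 0) := by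
  simp_rw [binomTail, sum_filter, mul_sum]
  rw [sum_comm]
  refine sum_congr rfl fun k hk => ?_
  rw [eq_add_sum_range_sub_mul_ite f (by simp at hk; omega : k ≤ L), add_sub_cancel_left,
    mul_sum]
  refine sum_congr rfl fun t _ => ?_
  split_ifs <;> ring

theorem one_add_sum_pow_sub_mul_binomTail_succ {n L : ℕ} (hL : n ≤ L) (q r : ℝ) :
    1 + ∑ t ∈ range L, (r ^ (t + 1) - r ^ t) * binomTail n q (t + 1) = (1 - q + q * r) ^ n := by
  rw [sum_sub_mul_binomTail_succ (r ^ ·) hL]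
  simp_rw [mul_sub, sum_sub_distrib, sum_range_choose_mul_pow_mul_pow_mul_pow, pow_zero, mul_one]
  have hmass := sum_range_choose_mul_pow_mul_pow_mul_pow n q 1
  simp only [one_pow, mul_one, sub_add_cancel] at hmass
  rw [hmass]
  ring

theorem inv_pow_mul_le_inv_pow_sub_one {c a : ℝ} (hc : 0 < c) (ha : a ≤ c) {j : ℕ}
    (hj : 1 ≤ j) : (c ^ j)⁻¹ * a ≤ (c ^ (j - 1))⁻¹ := by
  calc (c ^ j)⁻¹ * a ≤ (c ^ j)⁻¹ * c := by gcongr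
    _ = (c ^ (j - 1))⁻¹ := by
      rw [← Nat.sub_add_cancel hj, pow_succ, Nat.add_sub_cancel]
      field_simp

theorem Real.exp_le_one_add_two_mul {θ : ℝ} (h0 : 0 ≤ θ) (h1 : θ ≤ 1) :
    Real.exp θ ≤ 1 + 2 * θ := by
  have hconv := convexOn_exp.2 (Set.mem_univ 0) (Set.mem_univ 1) (sub_nonneg.2 h1) h0
    (sub_add_cancel 1 θ)
  simp only [smul_eq_mul, mul_zero, zero_add, mul_one, Real.exp_zero] at hconv
  nlinarith [Real.exp_one_lt_d9]

theorem one_sub_add_mul_exp_pow_le {q θ : ℝ} (hq : 0 ≤ q) (hθ0 : 0 ≤ θ) (hθ1 : θ ≤ 1)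
    (n : ℕ) : (1 - q + q * Real.exp θ) ^ n ≤ Real.exp (2 * θ * q * n) := by
  have hexp := Real.exp_le_one_add_two_mul hθ0 hθ1
  have hbase : 0 ≤ 1 - q + q * Real.exp θ := by nlinarith [Real.add_one_le_exp θ]
  calc (1 - q + q * Real.exp θ) ^ n ≤ Real.exp (2 * θ * q) ^ n := by
        gcongr
        nlinarith [Real.add_one_le_exp (2 * θ * q)]
    _ = Real.exp (2 * θ * q * n) := by rw [← Real.exp_nat_mul]; ring_nf

theorem integrable_comp_of_ae_le {Ω : Type*} {m0 : MeasurableSpace Ω} {μ : Measure Ω}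
    [IsFiniteMeasure μ] {X : Ω → ℕ} (hX : Measurable X) {C : ℕ}
    (hC : ∀ᵐ ω ∂μ, X ω ≤ C) (f : ℕ → ℝ) : Integrable (fun ω => f (X ω)) μ := by
  refine .of_bound (measurable_from_nat.comp hX).aestronglyMeasurable
    (∑ k ∈ range (C + 1), ‖f k‖) ?_
  filter_upwards [hC] with ω hω
  exact single_le_sum (f := fun k => ‖f k‖) (fun _ _ => norm_nonneg _)
    (mem_range.2 (Nat.lt_succ_of_le hω))

theorem ae_le_add_mul_of_sub_ae_le {Ω : Type*} {m0 : MeasurableSpace Ω} {μ : Measure Ω}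
    {G : ℕ → Ω → ℕ} {C n : ℕ} (h1 : ∀ᵐ ω ∂μ, G 1 ω ≤ C)
    (hinc : ∀ k, ∀ᵐ ω ∂μ, G (k + 1) ω - G k ω ≤ n) (j : ℕ) :
    ∀ᵐ ω ∂μ, G (j + 1) ω ≤ C + j * n := by
  induction j with
  | zero => simpa using h1
  | succ j ih =>
    filter_upwards [ih, hinc (j + 1)] with ω hj hstep
    rw [add_mul, one_mul]
    omega

/-- Conditionally on `m`, `X` is stochastically dominated by `Binomial(n, q ω)`, stated
through the conditional tail probabilities `P(X ≥ t | m)`. -/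
def CondBinomDominated {Ω : Type*} {m0 : MeasurableSpace Ω} (μ : Measure Ω)
    (m : MeasurableSpace Ω) (X : Ω → ℕ) (n : ℕ) (q : Ω → ℝ) : Prop :=
  ∀ t : ℕ, μ[{ω | t ≤ X ω}.indicator (fun _ => (1 : ℝ)) | m]
    ≤ᵐ[μ] fun ω => binomTail n (q ω) t

namespace CondBinomDominated

variable {Ω : Type*} {m m0 : MeasurableSpace Ω} {μ : Measure Ω} {X : Ω → ℕ} {n : ℕ}

theorem ae_le [IsFiniteMeasure μ] {q : Ω → ℝ} (hm : m ≤ m0) (hX : Measurable X)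
    (h : CondBinomDominated μ m X n q) : ∀ᵐ ω ∂μ, X ω ≤ n := by
  have hS : MeasurableSet {ω | n + 1 ≤ X ω} := hX measurableSet_Ici
  have hnull : μ.real {ω | n + 1 ≤ X ω} ≤ 0 := by
    rw [← integral_indicator_one hS, ← integral_condExp hm]
    refine integral_nonpos_of_ae ?_
    filter_upwards [h (n + 1)] with ω hω
    rwa [binomTail_eq_zero_of_lt _ (Nat.lt_succ_self n)] at hω
  refine measure_mono_null (fun ω hω => ?_)
    ((measureReal_eq_zero_iff).1 (le_antisymm hnull measureReal_nonneg))
  simpa using hω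

theorem condExp_pow_le [IsFiniteMeasure μ] {q : Ω → ℝ} (hm : m ≤ m0) (hX : Measurable X)
    (h : CondBinomDominated μ m X n q) {r : ℝ} (hr : 1 ≤ r) :
    μ[fun ω => r ^ X ω | m] ≤ᵐ[μ] fun ω => (1 - q ω + q ω * r) ^ n := by
  set c : ℕ → ℝ := fun t => r ^ (t + 1) - r ^ t
  set g : ℕ → Ω → ℝ := fun t => {ω | t + 1 ≤ X ω}.indicator (fun _ => 1)
  have hg : ∀ t ∈ range n, Integrable (c t • g t) μ := fun t _ =>
    ((integrable_const 1).indicator (hX measurableSet_Ici)).smul (c t)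
  have hlayer : (fun ω => r ^ X ω) =ᵐ[μ] (fun _ => 1) + ∑ t ∈ range n, c t • g t := by
    filter_upwards [h.ae_le hm hX] with ω hω
    simpa [g, Set.indicator_apply] using eq_add_sum_range_sub_mul_ite (r ^ ·) hω
  filter_upwards [condExp_congr_ae (m := m) hlayer,
    condExp_add (integrable_const 1) (integrable_finsetSum' _ hg) m, condExp_finsetSum hg m,
    ae_all_iff.2 fun t => condExp_smul (c t) (g t) m, ae_all_iff.2 fun t => h (t + 1)]
    with ω hlayer hadd hsum hsmul htail
  rw [hlayer, hadd, Pi.add_apply, hsum, condExp_const hm,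
    ← one_add_sum_pow_sub_mul_binomTail_succ le_rfl]
  simp only [Finset.sum_apply, hsmul, Pi.smul_apply, smul_eq_mul]
  gcongr with t
  · exact sub_nonneg.2 (pow_le_pow_right₀ hr t.le_succ)
  · exact htail t

theorem ae_le_add_one [IsFiniteMeasure μ] {q : Ω → ℝ} (hm : m ≤ m0) (hX : Measurable X)
    (h : CondBinomDominated μ m (X - 1) n q) : ∀ᵐ ω ∂μ, X ω ≤ n + 1 := by
  filter_upwards [h.ae_le hm (hX.sub measurable_const)] with ω hω
  simp only [Pi.sub_apply] at hω
  omega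

theorem integral_pow_le [IsProbabilityMeasure μ] (hm : m ≤ m0) (hX : Measurable X) {q : ℝ}
    (h : CondBinomDominated μ m X n fun _ => q) {r : ℝ} (hr : 1 ≤ r) :
    ∫ ω, r ^ X ω ∂μ ≤ (1 - q + q * r) ^ n := by
  rw [← integral_condExp hm]
  simpa using integral_mono_ae integrable_condExp (integrable_const _) (h.condExp_pow_le hm hX hr)

end CondBinomDominated

section

variable {Ω : Type*} {m m0 : MeasurableSpace Ω} {μ : Measure Ω} [IsProbabilityMeasure μ]

theorem condBinomDominated_bot {X : Ω → ℕ} (hX : Measurable X) {n : ℕ} {q : ℝ}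
    (h : ∀ t : ℕ, μ.real {ω | t ≤ X ω} ≤ binomTail n q t) :
    CondBinomDominated μ ⊥ X n fun _ => q := fun t => by
  rw [condExp_bot]
  exact ae_of_all _ fun _ => (integral_indicator_one (hX measurableSet_Ici)).trans_le (h t)

theorem condBinomDominated_bot_sub_one {X : Ω → ℕ} (hX : Measurable X) {n : ℕ} {q : ℝ}
    (h : ∀ t : ℕ, μ.real {ω | t + 1 ≤ X ω} ≤ binomTail n q t) :
    CondBinomDominated μ ⊥ (X - 1) n fun _ => q := by
  refine condBinomDominated_bot (X := X - 1) (hX.sub measurable_const) fun t => ?_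
  cases t with
  | zero => simp [binomTail_zero_right]
  | succ s =>
    have hset : {ω | s + 1 ≤ (X - 1) ω} = {ω | s + 1 + 1 ≤ X ω} := by
      ext ω
      simp only [Pi.sub_apply, Pi.one_apply, Set.mem_ofPred_eq]
      omega
    rw [hset]
    exact h (s + 1)

theorem integral_exp_le_of_condBinomDominated_sub_one (hm : m ≤ m0) {X : Ω → ℕ}
    (hX : Measurable X) {n : ℕ} {q : ℝ} (hq : 0 ≤ q)
    (h : CondBinomDominated μ m (X - 1) n fun _ => q) :
    ∫ ω, Real.exp (X ω) ∂μ ≤ Real.exp (2 * q * n + 1) := by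
  have hX' : Measurable (X - 1) := hX.sub measurable_const
  have hbound := h.ae_le hm hX'
  calc ∫ ω, Real.exp (X ω) ∂μ ≤ ∫ ω, Real.exp 1 * Real.exp 1 ^ (X ω - 1) ∂μ := by
        refine integral_mono_ae
          (integrable_comp_of_ae_le hX (h.ae_le_add_one hm hX) fun k => Real.exp k)
          ((integrable_comp_of_ae_le hX' hbound _).const_mul _) (ae_of_all _ fun ω => ?_)
        dsimp only
        rw [← Real.exp_nat_mul, mul_one, ← Real.exp_add, Real.exp_le_exp]
        exact_mod_cast (show X ω ≤ 1 + (X ω - 1) by omega)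
    _ ≤ Real.exp 1 * (1 - q + q * Real.exp 1) ^ n := by
        rw [integral_const_mul]
        gcongr
        exact h.integral_pow_le hm hX' (Real.one_le_exp zero_le_one)
    _ ≤ Real.exp 1 * Real.exp (2 * 1 * q * n) := by
        gcongr
        exact one_sub_add_mul_exp_pow_le hq zero_le_one le_rfl n
    _ = Real.exp (2 * q * n + 1) := by rw [← Real.exp_add]; ring_nf

theorem integral_exp_le_of_condBinomDominated_sub (hm : m ≤ m0) {Y Z : Ω → ℕ}
    (hY : Measurable[m] Y) (hZ : Measurable Z) (hYZ : Y ≤ Z)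
    {C : ℕ} (hYC : ∀ᵐ ω ∂μ, Y ω ≤ C) {n : ℕ} {p : ℝ} {q : Ω → ℝ}
    (h : CondBinomDominated μ m (Z - Y) n q) (hq0 : ∀ ω, 0 ≤ q ω) (hq : ∀ ω, q ω ≤ p * Y ω)
    {θ θ' : ℝ} (hθ0 : 0 ≤ θ) (hθ1 : θ ≤ 1) (hθθ' : θ * (1 + 2 * p * n) ≤ θ') :
    ∫ ω, Real.exp (θ * Z ω) ∂μ ≤ ∫ ω, Real.exp (θ' * Y ω) ∂μ := by
  have hY0 : Measurable Y := hY.mono hm le_rfl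
  have hD : Measurable (Z - Y) := hZ.sub hY0
  have hDn := h.ae_le hm hD
  set A : Ω → ℝ := fun ω => Real.exp (θ * Y ω)
  set B : Ω → ℝ := fun ω => Real.exp θ ^ (Z ω - Y ω)
  have hAB : (fun ω => Real.exp (θ * Z ω)) = A * B := funext fun ω => by
    simp only [A, B, Pi.mul_apply, ← Real.exp_nat_mul, ← Real.exp_add, Nat.cast_sub (hYZ ω)]
    ring_nf
  have hABint : Integrable (A * B) μ := by
    rw [← hAB]
    refine integrable_comp_of_ae_le hZ (C := C + n) ?_ (fun k => Real.exp (θ * k))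
    filter_upwards [hYC, hDn] with ω hYω hDω
    simp only [Pi.sub_apply] at hDω
    have := hYZ ω
    omega
  have hpull : μ[A * B | m] =ᵐ[μ] A * μ[B | m] :=
    condExp_mul_of_stronglyMeasurable_left
      ((measurable_from_nat (f := fun k : ℕ => Real.exp (θ * k))).comp hY).stronglyMeasurable
      hABint (integrable_comp_of_ae_le hD hDn _)
  calc ∫ ω, Real.exp (θ * Z ω) ∂μ = ∫ ω, (A * μ[B | m]) ω ∂μ := by
        rw [hAB, ← integral_condExp hm, integral_congr_ae hpull]
    _ ≤ ∫ ω, Real.exp (θ' * Y ω) ∂μ := by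
        refine integral_mono_ae (integrable_condExp.congr hpull)
          (integrable_comp_of_ae_le hY0 hYC fun k => Real.exp (θ' * k)) ?_
        filter_upwards [h.condExp_pow_le hm hD (Real.one_le_exp hθ0)] with ω hω
        calc A ω * μ[B | m] ω ≤ Real.exp (θ * Y ω) * Real.exp (2 * θ * q ω * n) := by
              gcongr
              exact hω.trans (one_sub_add_mul_exp_pow_le (hq0 ω) hθ0 hθ1 n)
          _ ≤ Real.exp (θ * Y ω) * Real.exp (2 * θ * (p * Y ω) * n) := by gcongr; exact hq ω
          _ = Real.exp (θ * (1 + 2 * p * n) * Y ω) := by rw [← Real.exp_add]; ring_nf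
          _ ≤ Real.exp (θ' * Y ω) := by gcongr

end

theorem neighborhood_growth_exponential_moment_general
    {Ω : Type*} {m0 : MeasurableSpace Ω} (μ : Measure Ω) [IsProbabilityMeasure μ]
    (ℱ : Filtration ℕ m0) (n : ℕ) (p : ℝ) (hp0 : 0 < p)
    (G : ℕ → Ω → ℕ)
    (hadapt : ∀ k, Measurable[ℱ k] (G k))
    (hmono : ∀ k ω, G k ω ≤ G (k + 1) ω)
    (hG1 : ∀ t : ℕ, (μ {ω | t + 1 ≤ G 1 ω}).toReal ≤ binomTail n p t)
    (hstep : ∀ k t : ℕ,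
      μ[{ω | t ≤ G (k + 1) ω - G k ω}.indicator (fun _ => (1 : ℝ)) | ℱ k]
        ≤ᵐ[μ] fun ω => binomTail n (min 1 (p * (G k ω : ℝ))) t) :
    ∀ j : ℕ, 1 ≤ j →
      ∫ ω, Real.exp (((2 * p * (n : ℝ) + 2) ^ (j - 1))⁻¹ * (G j ω : ℝ)) ∂μ
        ≤ Real.exp (2 * p * (n : ℝ) + 1) := by
  have hGm : ∀ k, Measurable (G k) := fun k => (hadapt k).mono (ℱ.le k) le_rfl
  have hinc : ∀ k, CondBinomDominated μ (ℱ k) (G (k + 1) - G k) n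
      fun ω => min 1 (p * G k ω) := hstep
  have hfirst := condBinomDominated_bot_sub_one (hGm 1) hG1
  have hbdd := ae_le_add_mul_of_sub_ae_le (hfirst.ae_le_add_one bot_le (hGm 1)) fun k =>
    (hinc k).ae_le (ℱ.le k) ((hGm (k + 1)).sub (hGm k))
  intro j hj
  induction j, hj using Nat.le_induction with
  | base => simpa using integral_exp_le_of_condBinomDominated_sub_one bot_le (hGm 1) hp0.le hfirst
  | succ j hj ih =>
    have hpn : 0 ≤ 2 * p * n := by positivity
    rw [Nat.add_sub_cancel]
    refine le_trans ?_ ih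
    exact integral_exp_le_of_condBinomDominated_sub (ℱ.le j) (hadapt j) (hGm (j + 1)) (hmono j)
      (Nat.sub_add_cancel hj ▸ hbdd (j - 1)) (hinc j) (fun ω => by positivity)
      (fun ω => min_le_right _ _) (by positivity)
      (inv_le_one_of_one_le₀ (one_le_pow₀ (by linarith)))
      (inv_pow_mul_le_inv_pow_sub_one (by positivity) (by linarith) hj)

/-- Lemma 2.2: if `G₁` is stochastically dominated by `1 + Binomial(n,p)` and,
conditioned on `ℱ k`, `G_{k+1} - G_k` is stochastically dominated by
`Binomial(n, p·G_k)`, then `E[exp((2pn+2)^{-(j-1)} G_j)] ≤ exp(2pn+1)` for all `j ≥ 1`. -/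
theorem neighborhood_growth_exponential_moment
    {Ω : Type*} {m0 : MeasurableSpace Ω} (μ : Measure Ω) [IsProbabilityMeasure μ]
    (ℱ : Filtration ℕ m0) (n : ℕ) (p : ℝ) (hp0 : 0 < p) (hp1 : p ≤ 1)
    (G : ℕ → Ω → ℕ)
    (hadapt : ∀ k, Measurable[ℱ k] (G k))
    (hmono : ∀ k ω, G k ω ≤ G (k + 1) ω)
    (hG1 : ∀ t : ℕ, (μ {ω | t + 1 ≤ G 1 ω}).toReal ≤ binomTail n p t)
    (hstep : ∀ k t : ℕ,
      μ[{ω | t ≤ G (k + 1) ω - G k ω}.indicator (fun _ => (1 : ℝ)) | ℱ k]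
        ≤ᵐ[μ] fun ω => binomTail n (min 1 (p * (G k ω : ℝ))) t) :
    ∀ j : ℕ, 1 ≤ j →
      ∫ ω, Real.exp (((2 * p * (n : ℝ) + 2) ^ (j - 1))⁻¹ * (G j ω : ℝ)) ∂μ
        ≤ Real.exp (2 * p * (n : ℝ) + 1) :=
  neighborhood_growth_exponential_moment_general μ ℱ n p hp0 G hadapt hmono hG1 hstep

end
end
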